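/- arXiv:0704.3238 — 4 statements merged into one kernel-verified Lean document; each statement's English description precedes it below -/
import Mathlib

section
/- A formula of L_CSTIT is valid in all Kripke models that satisfy the general permutation property (with each R_i an equivalence relation) if and only if it is provable from the axiom schemas S5(i) for every agent i, Def(□): □φ ↔ [1][0]φ, and (GPerm_k): ⟨l⟩⟨m⟩φ → ⟨n⟩⋀_{i ≤ k, i ≠ n}⟨i⟩φ for all k and all agents l,m,n, by the rules of modus ponens and [i]-necessitation; this holds both when Agt is finite with |Agt| ≥ 2 and when Agt = ℕ. -/
/-! Common infrastructure for STIT logic (Chellas STIT, deliberative STIT,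
historic necessity), following Balbiani, Herzig & Troquard,
"Alternative axiomatics and complexity of deliberative STIT theories". -/

namespace STIT

/-- Formulas of the (combined) STIT language, over a countable set of atoms
(indexed by `ℕ`) and agents indexed by `ℕ` (the actual agent set `Agt` is an
initial segment of `ℕ`).  `cstit i` is the Chellas STIT operator `[i]`,
`dstit i` is the deliberative STIT operator `[i dstit: ·]`, and `box` is the
historic necessity operator `□`. -/
inductive Fml : Type
  | atm : ℕ → Fml
  | neg : Fml → Fml
  | and : Fml → Fml → Fml
  | cstit : ℕ → Fml → Fml
  | dstit : ℕ → Fml → Fml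
  | box : Fml → Fml
  deriving DecidableEq

/-- Material implication `φ → ψ`, as the abbreviation `¬(φ ∧ ¬ψ)`. -/
def impF (φ ψ : Fml) : Fml := .neg (.and φ (.neg ψ))

/-- Disjunction `φ ∨ ψ`, as the abbreviation `¬(¬φ ∧ ¬ψ)`. -/
def orF (φ ψ : Fml) : Fml := .neg (.and (.neg φ) (.neg ψ))

/-- Biimplication `φ ↔ ψ`, as the abbreviation `(φ → ψ) ∧ (ψ → φ)`. -/
def iffF (φ ψ : Fml) : Fml := .and (impF φ ψ) (impF ψ φ)

/-- `◇φ`, abbreviating `¬□¬φ`. -/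
def diaF (φ : Fml) : Fml := .neg (.box (.neg φ))

/-- `⟨i⟩φ`, abbreviating `¬[i]¬φ`. -/
def posF (i : ℕ) (φ : Fml) : Fml := .neg (.cstit i (.neg φ))

/-- Conjunction of a (finite) list of formulas; the empty conjunction is a
tautology `⊤`. -/
def conjF : List Fml → Fml
  | [] => impF (.atm 0) (.atm 0)
  | [φ] => φ
  | φ :: l => .and φ (conjF l)

/-- The length `‖φ‖` of a formula. -/
def len : Fml → ℕ
  | .atm _ => 1
  | .neg φ => 1 + len φ
  | .and φ ψ => 3 + len φ + len ψ
  | .cstit _ φ => 3 + len φ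
  | .dstit _ φ => 5 + len φ
  | .box φ => 1 + len φ

/-- The set `sf φ` of subformulas of `φ`. -/
def sf : Fml → Finset Fml
  | .atm p => {.atm p}
  | .neg φ => insert (.neg φ) (sf φ)
  | .and φ ψ => insert (.and φ ψ) (sf φ ∪ sf ψ)
  | .cstit i φ => insert (.cstit i φ) (sf φ)
  | .dstit i φ => insert (.dstit i φ) (sf φ)
  | .box φ => insert (.box φ) (sf φ)

/-- The set of atoms occurring in a formula. -/
def atoms : Fml → Finset ℕ
  | .atm p => {p}
  | .neg φ => atoms φ
  | .and φ ψ => atoms φ ∪ atoms ψ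
  | .cstit _ φ => atoms φ
  | .dstit _ φ => atoms φ
  | .box φ => atoms φ

/-- `φ` contains no deliberative STIT operator (so `φ` belongs to `L_CSTIT`
when it moreover only uses box/cstit). -/
def NoDstit : Fml → Prop
  | .atm _ => True
  | .neg φ => NoDstit φ
  | .and φ ψ => NoDstit φ ∧ NoDstit ψ
  | .cstit _ φ => NoDstit φ
  | .dstit _ _ => False
  | .box φ => NoDstit φ

/-- `φ` contains no Chellas STIT operator (so `φ` belongs to `L_DSTIT`). -/
def NoCstit : Fml → Prop
  | .atm _ => True
  | .neg φ => NoCstit φ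
  | .and φ ψ => NoCstit φ ∧ NoCstit ψ
  | .cstit _ _ => False
  | .dstit _ φ => NoCstit φ
  | .box φ => NoCstit φ

/-- `φ` contains no historic necessity operator. -/
def NoBox : Fml → Prop
  | .atm _ => True
  | .neg φ => NoBox φ
  | .and φ ψ => NoBox φ ∧ NoBox ψ
  | .cstit _ φ => NoBox φ
  | .dstit _ φ => NoBox φ
  | .box _ => False

/-- All agents occurring in `φ` belong to `A`. -/
def AgentsIn (A : Set ℕ) : Fml → Prop
  | .atm _ => True
  | .neg φ => AgentsIn A φ
  | .and φ ψ => AgentsIn A φ ∧ AgentsIn A ψ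
  | .cstit i φ => i ∈ A ∧ AgentsIn A φ
  | .dstit i φ => i ∈ A ∧ AgentsIn A φ
  | .box φ => AgentsIn A φ

/-- `A` is an initial segment `{0, 1, …}` of `ℕ`. -/
def InitSeg (A : Set ℕ) : Prop := ∀ i ∈ A, ∀ j : ℕ, j ≤ i → j ∈ A

/-- A BT+AC model over the agent set `Agt`: a nonempty tree-like strict
order of moments, together with a choice function and a valuation.
Histories are represented as maximal chains (maximal linearly `<`-ordered
subsets) of moments; `Choice i w` is, for each agent `i ∈ Agt`, a partition
of the set `H_w` of histories passing through `w` into nonempty cells,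
satisfying the superadditivity constraint (independence of agents). -/
structure BTAC (Agt : Set ℕ) where
  W : Type
  neW : Nonempty W
  lt : W → W → Prop
  lt_irrefl : ∀ w : W, ¬ lt w w
  lt_trans : ∀ {a b c : W}, lt a b → lt b c → lt a c
  treelike : ∀ w₁ w₂ w₃ : W, lt w₁ w₃ → lt w₂ w₃ → w₁ = w₂ ∨ lt w₁ w₂ ∨ lt w₂ w₁
  Choice : ℕ → W → Set (Set (Set W))
  V : ℕ → W → Set W → Prop
  choice_hist : ∀ i ∈ Agt, ∀ w : W, ∀ Q ∈ Choice i w, ∀ h ∈ Q,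
      IsMaxChain lt h ∧ w ∈ h
  choice_cell_nonempty : ∀ i ∈ Agt, ∀ w : W, ∀ Q ∈ Choice i w, Q.Nonempty
  choice_nonempty : ∀ i ∈ Agt, ∀ w : W, (Choice i w).Nonempty
  choice_cover : ∀ i ∈ Agt, ∀ w : W, ∀ h : Set W,
      IsMaxChain lt h → w ∈ h → ∃ Q ∈ Choice i w, h ∈ Q
  choice_disjoint : ∀ i ∈ Agt, ∀ w : W, ∀ Q ∈ Choice i w, ∀ Q' ∈ Choice i w,
      (Q ∩ Q').Nonempty → Q = Q'
  superadd : ∀ w : W, ∀ s : ℕ → Set (Set W),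
      (∀ i ∈ Agt, s i ∈ Choice i w) → (⋂ i ∈ Agt, s i).Nonempty

/-- Truth of a formula at an index `w/h` of a BT+AC model.  (`[i]φ` holds at
`w/h` iff `φ` holds at `w/h'` for every history `h'` in the cell of
`Choice i w` containing `h`; `□φ` holds at `w/h` iff `φ` holds at `w/h'` for
every history `h'` through `w`; `[i dstit: φ]` additionally requires a
witness history through `w` where `φ` fails.) -/
def truth {Agt : Set ℕ} (M : BTAC Agt) : Fml → M.W → Set M.W → Prop
  | .atm p, w, h => M.V p w h
  | .neg φ, w, h => ¬ truth M φ w h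
  | .and φ ψ, w, h => truth M φ w h ∧ truth M ψ w h
  | .cstit i φ, w, h =>
      ∀ h' : Set M.W, (∃ Q ∈ M.Choice i w, h ∈ Q ∧ h' ∈ Q) → truth M φ w h'
  | .dstit i φ, w, h =>
      (∀ h' : Set M.W, (∃ Q ∈ M.Choice i w, h ∈ Q ∧ h' ∈ Q) → truth M φ w h') ∧
      (∃ h'' : Set M.W, IsMaxChain M.lt h'' ∧ w ∈ h'' ∧ ¬ truth M φ w h'')
  | .box φ, w, h =>
      ∀ h' : Set M.W, IsMaxChain M.lt h' → w ∈ h' → truth M φ w h'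

/-- Validity in BT+AC structures over the agent set `Agt`: truth at every
index `w/h` (with `h` a history and `w ∈ h`) of every BT+AC model. -/
def validBTAC (Agt : Set ℕ) (φ : Fml) : Prop :=
  ∀ M : BTAC Agt, ∀ w : M.W, ∀ h : Set M.W,
    IsMaxChain M.lt h → w ∈ h → truth M φ w h

/-- Satisfiability in BT+AC structures over the agent set `Agt`. -/
def satBTAC (Agt : Set ℕ) (φ : Fml) : Prop :=
  ∃ M : BTAC Agt, ∃ w : M.W, ∃ h : Set M.W,
    IsMaxChain M.lt h ∧ w ∈ h ∧ truth M φ w h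

/-- A Kripke model over the agent set `Agt`: a nonempty set of worlds, an
equivalence relation `R i` for each agent `i ∈ Agt`, and a valuation. -/
structure KModel (Agt : Set ℕ) where
  W : Type
  neW : Nonempty W
  R : ℕ → W → W → Prop
  equiv : ∀ i ∈ Agt, Equivalence (R i)
  V : ℕ → Set W

/-- The general permutation property: for all worlds `w, v` and agents
`l, m, n ∈ Agt`, if `⟨w,v⟩ ∈ R_l ∘ R_m` then there is `u` with `⟨w,u⟩ ∈ R_n`
and `⟨u,v⟩ ∈ R_i` for every agent `i ≠ n`. -/
def GenPerm {Agt : Set ℕ} (M : KModel Agt) : Prop :=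
  ∀ w v : M.W, ∀ l ∈ Agt, ∀ m ∈ Agt, ∀ n ∈ Agt,
    Relation.Comp (M.R l) (M.R m) w v →
    ∃ u : M.W, M.R n w u ∧ ∀ i ∈ Agt, i ≠ n → M.R i u v

/-- Truth in a Kripke model: `[i]` is interpreted by `R i`, and `□` by the
composition `R 1 ∘ R 0` (so that `Def(□)` holds). -/
def ktruth {Agt : Set ℕ} (M : KModel Agt) : Fml → M.W → Prop
  | .atm p, w => w ∈ M.V p
  | .neg φ, w => ¬ ktruth M φ w
  | .and φ ψ, w => ktruth M φ w ∧ ktruth M ψ w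
  | .cstit i φ, w => ∀ u : M.W, M.R i w u → ktruth M φ u
  | .dstit i φ, w =>
      (∀ u : M.W, M.R i w u → ktruth M φ u) ∧
      (∃ u : M.W, Relation.Comp (M.R 1) (M.R 0) w u ∧ ¬ ktruth M φ u)
  | .box φ, w => ∀ u : M.W, Relation.Comp (M.R 1) (M.R 0) w u → ktruth M φ u

/-- Validity in all Kripke models over `Agt` (with equivalence relations)
satisfying the general permutation property. -/
def validK (Agt : Set ℕ) (φ : Fml) : Prop :=
  ∀ M : KModel Agt, GenPerm M → ∀ w : M.W, ktruth M φ w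

/-- Satisfiability in some Kripke model over `Agt` (with equivalence
relations) satisfying the general permutation property. -/
def satK (Agt : Set ℕ) (φ : Fml) : Prop :=
  ∃ M : KModel Agt, GenPerm M ∧ ∃ w : M.W, ktruth M φ w

/-- `φ` is (a substitution instance of) a propositional tautology: it is true
under every assignment of truth values to formulas that respects `¬` and `∧`. -/
def Taut (φ : Fml) : Prop :=
  ∀ v : Fml → Prop,
    (∀ ψ : Fml, v (.neg ψ) ↔ ¬ v ψ) →
    (∀ ψ χ : Fml, v (.and ψ χ) ↔ (v ψ ∧ v χ)) →
    v φ

/-- The S5 axiom schemas (K, T and 5) for a box-like operator `op`. -/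
def s5Set (op : Fml → Fml) : Set Fml :=
  {χ | (∃ φ ψ : Fml, χ = impF (op (impF φ ψ)) (impF (op φ) (op ψ))) ∨
       (∃ φ : Fml, χ = impF (op φ) φ) ∨
       (∃ φ : Fml, χ = impF (.neg (op (.neg φ))) (op (.neg (op (.neg φ)))))}

/-- The schemas `(Incl_i) : □φ → [i]φ` for each agent `i ∈ Agt`. -/
def inclSet (Agt : Set ℕ) : Set Fml :=
  {χ | ∃ i ∈ Agt, ∃ φ : Fml, χ = impF (.box φ) (.cstit i φ)}

/-- The formula `(AAIA_k) : ◇φ → ⟨k⟩⋀_{0 ≤ i < k}⟨i⟩φ`. -/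
def aaiaFml (k : ℕ) (φ : Fml) : Fml :=
  impF (diaF φ) (posF k (conjF ((List.range k).map (fun i => posF i φ))))

/-- The alternative independence schemas `(AAIA_k)` for all `k ≥ 1` with
agents `0, …, k ∈ Agt`. -/
def aaiaSet (Agt : Set ℕ) : Set Fml :=
  {χ | ∃ k : ℕ, 1 ≤ k ∧ (∀ i ≤ k, i ∈ Agt) ∧ ∃ φ : Fml, χ = aaiaFml k φ}

/-- The formula `(AIA_k) : (◇[0]φ₀ ∧ … ∧ ◇[k]φₖ) → ◇([0]φ₀ ∧ … ∧ [k]φₖ)`. -/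
def aiaFml (k : ℕ) (φs : ℕ → Fml) : Fml :=
  impF (conjF ((List.range (k+1)).map (fun i => diaF (.cstit i (φs i)))))
       (diaF (conjF ((List.range (k+1)).map (fun i => .cstit i (φs i)))))

/-- The formula `(GPerm_k) : ⟨l⟩⟨m⟩φ → ⟨n⟩⋀_{i ≤ k, i ≠ n}⟨i⟩φ`. -/
def gpermFml (k l m n : ℕ) (φ : Fml) : Fml :=
  impF (posF l (posF m φ))
       (posF n (conjF (((List.range (k+1)).filter (fun i => i != n)).map
          (fun i => posF i φ))))

/-- The general permutation schemas `(GPerm_k)` for all `k ≥ 0` (with agents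
`0, …, k ∈ Agt`) and agents `l, m, n ∈ Agt`. -/
def gpermSet (Agt : Set ℕ) : Set Fml :=
  {χ | ∃ k : ℕ, (∀ i ≤ k, i ∈ Agt) ∧
       ∃ l ∈ Agt, ∃ m ∈ Agt, ∃ n ∈ Agt, ∃ φ : Fml, χ = gpermFml k l m n φ}

/-- The definition schema `Def(□) : □φ ↔ [1][0]φ`. -/
def defBoxSet : Set Fml :=
  {χ | ∃ φ : Fml, χ = iffF (.box φ) (.cstit 1 (.cstit 0 φ))}

/-- The alternative axiomatics of Section 3: `S5(□)`, `S5(i)` for each agent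
`i ∈ Agt`, `(Incl_i)` and `(AAIA_k)`. -/
def xuAltAx (Agt : Set ℕ) : Set Fml :=
  s5Set Fml.box ∪ (⋃ i ∈ Agt, s5Set (fun φ => Fml.cstit i φ)) ∪
    inclSet Agt ∪ aaiaSet Agt

/-- The axiomatics of Section 4: `S5(i)` for each agent `i ∈ Agt`, `Def(□)`
and `(GPerm_k)`. -/
def gpermAx (Agt : Set ℕ) : Set Fml :=
  (⋃ i ∈ Agt, s5Set (fun φ => Fml.cstit i φ)) ∪ defBoxSet ∪ gpermSet Agt

/-- Hilbert-style provability from the axiom set `Ax` (together with all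
propositional tautologies) by modus ponens and `□`-necessitation. -/
inductive ProvB (Ax : Set Fml) : Fml → Prop
  | taut {φ : Fml} : Taut φ → ProvB Ax φ
  | axm {φ : Fml} : φ ∈ Ax → ProvB Ax φ
  | mp {φ ψ : Fml} : ProvB Ax (impF φ ψ) → ProvB Ax φ → ProvB Ax ψ
  | nec {φ : Fml} : ProvB Ax φ → ProvB Ax (.box φ)

/-- Hilbert-style provability from the axiom set `Ax` (together with all
propositional tautologies) by modus ponens and `[i]`-necessitation for each
agent `i ∈ Agt`. -/
inductive ProvC (Agt : Set ℕ) (Ax : Set Fml) : Fml → Prop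
  | taut {φ : Fml} : Taut φ → ProvC Agt Ax φ
  | axm {φ : Fml} : φ ∈ Ax → ProvC Agt Ax φ
  | mp {φ ψ : Fml} : ProvC Agt Ax (impF φ ψ) → ProvC Agt Ax φ → ProvC Agt Ax ψ
  | nec {i : ℕ} {φ : Fml} : i ∈ Agt → ProvC Agt Ax φ → ProvC Agt Ax (.cstit i φ)

/-- The biimplication `B_ψ` relating the fresh atom `p_ψ` (given by `pA ψ`)
with `ψ`, used in the translation `tr` from `L_DSTIT` to `L_CSTIT`:
`B_{[i dstit: φ]} = (p_{[i dstit: φ]} ↔ [i]p_φ ∧ ¬□p_φ)`. -/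
def Beq (pA : Fml → ℕ) : Fml → Fml
  | .atm q => iffF (.atm (pA (.atm q))) (.atm q)
  | .neg φ => iffF (.atm (pA (.neg φ))) (.neg (.atm (pA φ)))
  | .and φ ψ => iffF (.atm (pA (.and φ ψ))) (.and (.atm (pA φ)) (.atm (pA ψ)))
  | .cstit i φ => iffF (.atm (pA (.cstit i φ))) (.cstit i (.atm (pA φ)))
  | .dstit i φ => iffF (.atm (pA (.dstit i φ)))
      (.and (.cstit i (.atm (pA φ))) (.neg (.box (.atm (pA φ)))))
  | .box φ => iffF (.atm (pA (.box φ))) (.box (.atm (pA φ)))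

/-- The biimplication `B'_ψ` used in the translation `tr'` from `L_CSTIT` to
`L_DSTIT`: `B'_{[i]φ} = (p_{[i]φ} ↔ [i dstit: p_φ] ∨ □p_φ)`. -/
def Beq' (pA : Fml → ℕ) : Fml → Fml
  | .atm q => iffF (.atm (pA (.atm q))) (.atm q)
  | .neg φ => iffF (.atm (pA (.neg φ))) (.neg (.atm (pA φ)))
  | .and φ ψ => iffF (.atm (pA (.and φ ψ))) (.and (.atm (pA φ)) (.atm (pA ψ)))
  | .cstit i φ => iffF (.atm (pA (.cstit i φ)))
      (orF (.dstit i (.atm (pA φ))) (.box (.atm (pA φ))))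
  | .dstit i φ => iffF (.atm (pA (.dstit i φ))) (.dstit i (.atm (pA φ)))
  | .box φ => iffF (.atm (pA (.box φ))) (.box (.atm (pA φ)))

/-- The translation `tr(φ₀) = p_{φ₀} ∧ ⋀_{ψ ∈ sf(φ₀)} □B_ψ`. -/
noncomputable def tr (pA : Fml → ℕ) (φ0 : Fml) : Fml :=
  .and (.atm (pA φ0)) (conjF ((sf φ0).toList.map (fun ψ => .box (Beq pA ψ))))

/-- The translation `tr'(φ₀) = p_{φ₀} ∧ ⋀_{ψ ∈ sf(φ₀)} □B'_ψ`. -/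
noncomputable def tr' (pA : Fml → ℕ) (φ0 : Fml) : Fml :=
  .and (.atm (pA φ0)) (conjF ((sf φ0).toList.map (fun ψ => .box (Beq' pA ψ))))

/-- The atoms `p_ψ = pA ψ` for `ψ ∈ sf φ₀` are pairwise distinct and fresh
(none occurs in `φ₀`). -/
def Fresh (pA : Fml → ℕ) (φ0 : Fml) : Prop :=
  Set.InjOn pA ↑(sf φ0) ∧ ∀ ψ ∈ sf φ0, pA ψ ∉ atoms φ0

/-!
Soundness is a routine check that every axiom holds in a model with the general permutation
property. Completeness goes through the canonical model of maximal consistent sets, where `S5(i)`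
makes each canonical relation an equivalence and `Def(□)` lets `□` be read as `[1][0]`. The one
real point is that the canonical model has the general permutation property: if `w R_l x R_m v`,
the set `{ψ | [n]ψ ∈ w} ∪ {⟨i⟩χ | i ≠ n, χ ∈ v}` is consistent. A finite part of it mentions only
finitely many `χ`'s and agents, say all agents `≤ k`, and `(GPerm_k)` applied to the conjunction
`χ*` of those `χ`'s turns `⟨l⟩⟨m⟩χ* ∈ w` into `⟨n⟩⋀_{i ≤ k, i ≠ n}⟨i⟩χ* ∈ w`, which is what
consistency needs.
-/

lemma val_impF (v : Fml → Prop) (hn : ∀ ψ, v (.neg ψ) ↔ ¬ v ψ)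
    (ha : ∀ ψ χ, v (.and ψ χ) ↔ (v ψ ∧ v χ)) (φ ψ : Fml) :
    v (impF φ ψ) ↔ (v φ → v ψ) := by
  simp only [impF, hn, ha]
  tauto

lemma val_conjF (v : Fml → Prop) (hn : ∀ ψ, v (.neg ψ) ↔ ¬ v ψ)
    (ha : ∀ ψ χ, v (.and ψ χ) ↔ (v ψ ∧ v χ)) : ∀ L : List Fml, v (conjF L) ↔ ∀ ψ ∈ L, v ψ
  | [] => by simp [conjF, val_impF v hn ha]
  | [φ] => by simp [conjF]
  | φ :: ψ :: l => by
    simp only [conjF, ha, val_conjF v hn ha (ψ :: l), List.forall_mem_cons]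

lemma taut_impF_conjF_of_mem {L : List Fml} {ψ : Fml} (h : ψ ∈ L) : Taut (impF (conjF L) ψ) :=
  fun v hn ha => by
    rw [val_impF v hn ha, val_conjF v hn ha]
    exact fun hL => hL ψ h

lemma taut_impF_conjF_of_forall_eq {L : List Fml} {ψ : Fml} (h : ∀ χ ∈ L, χ = ψ) :
    Taut (impF ψ (conjF L)) :=
  fun v hn ha => by
    rw [val_impF v hn ha, val_conjF v hn ha]
    exact fun hψ χ hχ => h χ hχ ▸ hψ

section Soundness

variable {Agt : Set ℕ} (M : KModel Agt)

lemma ktruth_impF (φ ψ : Fml) (w : M.W) :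
    ktruth M (impF φ ψ) w ↔ (ktruth M φ w → ktruth M ψ w) :=
  val_impF (ktruth M · w) (fun _ => Iff.rfl) (fun _ _ => Iff.rfl) φ ψ

lemma ktruth_conjF (L : List Fml) (w : M.W) :
    ktruth M (conjF L) w ↔ ∀ ψ ∈ L, ktruth M ψ w :=
  val_conjF (ktruth M · w) (fun _ => Iff.rfl) (fun _ _ => Iff.rfl) L

lemma ktruth_posF (i : ℕ) (φ : Fml) (w : M.W) :
    ktruth M (posF i φ) w ↔ ∃ u, M.R i w u ∧ ktruth M φ u := by
  simp [posF, ktruth]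

lemma ktruth_of_mem_s5Set {i : ℕ} (hi : i ∈ Agt) {φ : Fml} (hφ : φ ∈ s5Set (Fml.cstit i))
    (w : M.W) : ktruth M φ w := by
  have hR := M.equiv i hi
  rcases hφ with ⟨α, β, rfl⟩ | ⟨α, rfl⟩ | ⟨α, rfl⟩ <;> simp only [ktruth_impF, ktruth]
  · exact fun h hα u hu => h u hu (hα u hu)
  · exact fun h => h w (hR.refl w)
  · exact fun h u hu h' => h fun x hx => h' x (hR.trans (hR.symm hu) hx)

lemma ktruth_of_mem_defBoxSet {φ : Fml} (hφ : φ ∈ defBoxSet) (w : M.W) : ktruth M φ w := by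
  obtain ⟨α, rfl⟩ := hφ
  simp only [iffF, ktruth, ktruth_impF]
  exact ⟨fun h x hx u hu => h u ⟨x, hx, hu⟩, fun h u ⟨x, hx, hu⟩ => h x hx u hu⟩

lemma ktruth_of_mem_gpermSet (hM : GenPerm M) {φ : Fml} (hφ : φ ∈ gpermSet Agt) (w : M.W) :
    ktruth M φ w := by
  obtain ⟨k, hk, l, hl, m, hm, n, hn, α, rfl⟩ := hφ
  simp only [gpermFml, ktruth_impF, ktruth_posF, ktruth_conjF, List.forall_mem_map,
    List.mem_filter, List.mem_range, bne_iff_ne, ne_eq, and_imp]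
  rintro ⟨x, hwx, y, hxy, hy⟩
  obtain ⟨u, hwu, hu⟩ := hM w y l hl m hm n hn ⟨x, hwx, hxy⟩
  exact ⟨u, hwu, fun i hik hin => ⟨y, hu i (hk i (Nat.lt_succ_iff.1 hik)) hin, hy⟩⟩

theorem ktruth_of_provC (hM : GenPerm M) {φ : Fml} (h : ProvC Agt (gpermAx Agt) φ)
    (w : M.W) : ktruth M φ w := by
  induction h generalizing w with
  | taut ht => exact ht (ktruth M · w) (fun _ => Iff.rfl) (fun _ _ => Iff.rfl)
  | axm hφ =>
    rcases hφ with (hφ | hφ) | hφ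
    · obtain ⟨i, hi, hφ⟩ := Set.mem_iUnion₂.1 hφ
      exact ktruth_of_mem_s5Set M hi hφ w
    · exact ktruth_of_mem_defBoxSet M hφ w
    · exact ktruth_of_mem_gpermSet M hM hφ w
  | mp _ _ ih₁ ih₂ => exact (ktruth_impF M _ _ w).1 (ih₁ w) (ih₂ w)
  | nec _ _ ih => exact fun u _ => ih u

end Soundness

theorem validK_of_provC {Agt : Set ℕ} {φ : Fml} (h : ProvC Agt (gpermAx Agt) φ) :
    validK Agt φ :=
  fun M hM => ktruth_of_provC M hM h

section Consistency

variable {Agt : Set ℕ} {Ax : Set Fml}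

namespace ProvC

lemma of_taut_imp {φ ψ : Fml} (t : Taut (impF φ ψ)) (h : ProvC Agt Ax φ) : ProvC Agt Ax ψ :=
  mp (taut t) h

lemma of_taut_imp₂ {φ ψ χ : Fml} (t : Taut (impF φ (impF ψ χ))) (h₁ : ProvC Agt Ax φ)
    (h₂ : ProvC Agt Ax ψ) : ProvC Agt Ax χ :=
  mp (of_taut_imp t h₁) h₂

lemma imp_trans {φ ψ χ : Fml} (h₁ : ProvC Agt Ax (impF φ ψ)) (h₂ : ProvC Agt Ax (impF ψ χ)) :
    ProvC Agt Ax (impF φ χ) :=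
  of_taut_imp₂ (fun v hn ha => by simp only [val_impF v hn ha]; tauto) h₁ h₂

lemma imp_conjF {φ : Fml} :
    ∀ {L : List Fml}, (∀ ψ ∈ L, ProvC Agt Ax (impF φ ψ)) → ProvC Agt Ax (impF φ (conjF L))
  | [], _ => taut fun v hn ha => by simp [val_impF v hn ha, val_conjF v hn ha]
  | ψ :: _, h =>
    of_taut_imp₂ (fun v hn ha => by simp only [val_impF v hn ha, val_conjF v hn ha]; grind)
      (h ψ List.mem_cons_self) (imp_conjF fun χ hχ => h χ (List.mem_cons_of_mem _ hχ))

end ProvC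

def ConS (Agt : Set ℕ) (Ax : Set Fml) (S : Set Fml) : Prop :=
  ∀ L : List Fml, (∀ ψ ∈ L, ψ ∈ S) → ¬ ProvC Agt Ax (.neg (conjF L))

def MCSet (Agt : Set ℕ) (Ax : Set Fml) (S : Set Fml) : Prop :=
  ConS Agt Ax S ∧ ∀ φ : Fml, φ ∈ S ∨ .neg φ ∈ S

lemma ConS.mono {S T : Set Fml} (h : ConS Agt Ax S) (hTS : T ⊆ S) : ConS Agt Ax T :=
  fun L hL => h L fun ψ hψ => hTS (hL ψ hψ)

lemma isOfFiniteCharacter_conS : Order.IsOfFiniteCharacter {S | ConS Agt Ax S} :=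
  fun _ => ⟨fun h _ hTS _ => h.mono hTS,
    fun h L hL => h {ψ | ψ ∈ L} (fun ψ hψ => hL ψ hψ) L.finite_toSet L fun _ => id⟩

open Classical in
lemma exists_imp_neg_of_not_conS_union {A B : Set Fml} (h : ¬ ConS Agt Ax (A ∪ B)) :
    ∃ L₁ L₂ : List Fml, (∀ ψ ∈ L₁, ψ ∈ A) ∧ (∀ ψ ∈ L₂, ψ ∈ B) ∧
      ProvC Agt Ax (impF (conjF L₁) (.neg (conjF L₂))) := by
  simp only [ConS, not_forall, not_not] at h
  obtain ⟨L, hL, hP⟩ := h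
  refine ⟨L.filter (· ∈ A), L.filter (· ∉ A), fun ψ hψ => by simpa using (List.mem_filter.1 hψ).2,
    fun ψ hψ => ?_, hP.of_taut_imp fun v hn ha => ?_⟩
  · obtain ⟨hψL, hψA⟩ := List.mem_filter.1 hψ
    exact (hL ψ hψL).resolve_left (by simpa using hψA)
  · simp only [val_impF v hn ha, hn, val_conjF v hn ha, List.mem_filter, decide_eq_true_eq,
      decide_not, Bool.not_eq_eq_eq_not, Bool.not_true, decide_eq_false_iff_not, and_imp]
    exact fun hL h₁ h₂ => hL fun ψ hψ => if hA : ψ ∈ A then h₁ ψ hψ hA else h₂ ψ hψ hA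

lemma exists_imp_neg_of_not_conS_insert {S : Set Fml} {φ : Fml}
    (h : ¬ ConS Agt Ax (insert φ S)) :
    ∃ L : List Fml, (∀ ψ ∈ L, ψ ∈ S) ∧ ProvC Agt Ax (impF (conjF L) (.neg φ)) := by
  rw [← Set.union_singleton] at h
  obtain ⟨L₁, L₂, hL₁, hL₂, hP⟩ := exists_imp_neg_of_not_conS_union h
  refine ⟨L₁, hL₁, ProvC.of_taut_imp₂ (fun v hn ha => ?_) hP
    (.taut (taut_impF_conjF_of_forall_eq hL₂))⟩
  simp only [val_impF v hn ha, hn]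
  tauto

lemma ConS.insert_or_insert_neg {S : Set Fml} (h : ConS Agt Ax S) (φ : Fml) :
    ConS Agt Ax (insert φ S) ∨ ConS Agt Ax (insert (.neg φ) S) := by
  by_contra! hc
  obtain ⟨L₁, hL₁, hP₁⟩ := exists_imp_neg_of_not_conS_insert hc.1
  obtain ⟨L₂, hL₂, hP₂⟩ := exists_imp_neg_of_not_conS_insert hc.2
  refine h (L₁ ++ L₂) (by simpa [or_imp, forall_and] using ⟨hL₁, hL₂⟩) <|
    ProvC.of_taut_imp₂ (fun v hn ha => ?_) hP₁ hP₂
  simp only [val_impF v hn ha, hn, val_conjF v hn ha, List.mem_append, or_imp, forall_and]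
  tauto

theorem ConS.exists_mcSet_superset {S : Set Fml} (h : ConS Agt Ax S) :
    ∃ M, S ⊆ M ∧ MCSet Agt Ax M := by
  obtain ⟨M, hSM, hM⟩ := isOfFiniteCharacter_conS.exists_maximal (x := S) h
  exact ⟨M, hSM, hM.prop, fun φ =>
    (hM.prop.insert_or_insert_neg φ).imp hM.mem_of_prop_insert hM.mem_of_prop_insert⟩

namespace MCSet

variable {S : Set Fml}

lemma mem_of_imp (hS : MCSet Agt Ax S) {L : List Fml} (hL : ∀ ψ ∈ L, ψ ∈ S) {φ : Fml}
    (h : ProvC Agt Ax (impF (conjF L) φ)) : φ ∈ S := by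
  refine (hS.2 φ).resolve_right fun hφ => hS.1 (L ++ [.neg φ]) ?_ (h.of_taut_imp ?_)
  · simpa [or_imp, forall_and] using ⟨hL, hφ⟩
  · intro v hn ha
    simp only [val_impF v hn ha, hn, val_conjF v hn ha, List.mem_append, List.mem_singleton,
      or_imp, forall_and, forall_eq]
    tauto

lemma mem_of_provC (hS : MCSet Agt Ax S) {φ : Fml} (h : ProvC Agt Ax φ) : φ ∈ S :=
  hS.mem_of_imp (L := []) (by simp) <|
    h.of_taut_imp fun v hn ha => by simp only [val_impF v hn ha]; exact fun hφ _ => hφ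

lemma mem_of_provC_imp (hS : MCSet Agt Ax S) {φ ψ : Fml} (h : ProvC Agt Ax (impF φ ψ))
    (hφ : φ ∈ S) : ψ ∈ S :=
  hS.mem_of_imp (L := [φ]) (List.forall_mem_singleton.2 hφ) h

lemma neg_mem_iff (hS : MCSet Agt Ax S) {φ : Fml} : .neg φ ∈ S ↔ φ ∉ S := by
  refine ⟨fun hnφ hφ => hS.1 [φ, .neg φ] ?_ (.taut fun v hn ha => ?_), (hS.2 φ).resolve_left⟩
  · simp [hφ, hnφ]
  · simp only [hn, val_conjF v hn ha, List.mem_cons, List.not_mem_nil, forall_eq_or_imp]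
    tauto

lemma and_mem_iff (hS : MCSet Agt Ax S) {φ ψ : Fml} : .and φ ψ ∈ S ↔ φ ∈ S ∧ ψ ∈ S := by
  refine ⟨fun h => ⟨hS.mem_of_provC_imp (.taut ?_) h, hS.mem_of_provC_imp (.taut ?_) h⟩,
    fun h => hS.mem_of_imp (L := [φ, ψ]) (by simpa using h) (.taut ?_)⟩ <;>
  · intro v hn ha
    simp only [val_impF v hn ha, ha, val_conjF v hn ha, List.mem_cons, List.not_mem_nil,
      forall_eq_or_imp]
    tauto

lemma conjF_mem (hS : MCSet Agt Ax S) {L : List Fml} (hL : ∀ ψ ∈ L, ψ ∈ S) : conjF L ∈ S :=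
  hS.mem_of_imp hL (.taut fun v hn ha => (val_impF v hn ha _ _).2 id)

end MCSet

lemma exists_mcSet_not_mem {φ : Fml} (h : ¬ ProvC Agt Ax φ) :
    ∃ M, MCSet Agt Ax M ∧ φ ∉ M := by
  have hcon : ConS Agt Ax {.neg φ} := fun L hL hP =>
    h (ProvC.of_taut_imp₂ (fun v hn ha => by simp only [val_impF v hn ha, hn]; tauto) hP
      (.taut (taut_impF_conjF_of_forall_eq hL)))
  obtain ⟨M, hsub, hM⟩ := hcon.exists_mcSet_superset
  exact ⟨M, hM, hM.neg_mem_iff.1 (hsub rfl)⟩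

end Consistency

section Canonical

variable {Agt : Set ℕ}

lemma provC_axK {i : ℕ} (hi : i ∈ Agt) (φ ψ : Fml) :
    ProvC Agt (gpermAx Agt) (impF (.cstit i (impF φ ψ)) (impF (.cstit i φ) (.cstit i ψ))) :=
  .axm (.inl (.inl (Set.mem_iUnion₂.2 ⟨i, hi, .inl ⟨φ, ψ, rfl⟩⟩)))

lemma provC_axT {i : ℕ} (hi : i ∈ Agt) (φ : Fml) :
    ProvC Agt (gpermAx Agt) (impF (.cstit i φ) φ) :=
  .axm (.inl (.inl (Set.mem_iUnion₂.2 ⟨i, hi, .inr (.inl ⟨φ, rfl⟩)⟩)))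

lemma provC_ax5 {i : ℕ} (hi : i ∈ Agt) (φ : Fml) :
    ProvC Agt (gpermAx Agt) (impF (posF i φ) (.cstit i (posF i φ))) :=
  .axm (.inl (.inl (Set.mem_iUnion₂.2 ⟨i, hi, .inr (.inr ⟨φ, rfl⟩)⟩)))

lemma provC_axDef (φ : Fml) :
    ProvC Agt (gpermAx Agt) (iffF (.box φ) (.cstit 1 (.cstit 0 φ))) :=
  .axm (.inl (.inr ⟨φ, rfl⟩))

lemma provC_gpermFml {k l m n : ℕ} (hk : ∀ i ≤ k, i ∈ Agt) (hl : l ∈ Agt) (hm : m ∈ Agt)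
    (hn : n ∈ Agt) (φ : Fml) : ProvC Agt (gpermAx Agt) (gpermFml k l m n φ) :=
  .axm (.inr ⟨k, hk, l, hl, m, hm, n, hn, φ, rfl⟩)

lemma ProvC.posF_mono {i : ℕ} (hi : i ∈ Agt) {φ ψ : Fml}
    (h : ProvC Agt (gpermAx Agt) (impF φ ψ)) :
    ProvC Agt (gpermAx Agt) (impF (posF i φ) (posF i ψ)) := by
  have hneg : ProvC Agt (gpermAx Agt) (impF (.neg ψ) (.neg φ)) :=
    h.of_taut_imp fun v hn ha => by simp only [val_impF v hn ha, hn]; tauto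
  refine (ProvC.mp (provC_axK hi _ _) (.nec hi hneg)).of_taut_imp fun v hn ha => ?_
  simp only [posF, val_impF v hn ha, hn]
  tauto

namespace MCSet

variable {S : Set Fml}

lemma cstit_mem_of_imp (hS : MCSet Agt (gpermAx Agt) S) {i : ℕ} (hi : i ∈ Agt) :
    ∀ {L : List Fml}, (∀ ψ ∈ L, .cstit i ψ ∈ S) → ∀ {φ : Fml},
      ProvC Agt (gpermAx Agt) (impF (conjF L) φ) → .cstit i φ ∈ S
  | [], _, φ, h =>
    hS.mem_of_provC <| .nec hi <| .mp h <| .taut fun v hn ha => by simp [val_conjF v hn ha]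
  | ψ :: l, hL, φ, h => by
    have hψφ : .cstit i (impF ψ φ) ∈ S :=
      hS.cstit_mem_of_imp hi (fun χ hχ => hL χ (List.mem_cons_of_mem _ hχ)) <|
        h.of_taut_imp fun v hn ha => by
          simp only [val_impF v hn ha, val_conjF v hn ha, List.forall_mem_cons]
          tauto
    refine hS.mem_of_imp (L := [.cstit i (impF ψ φ), .cstit i ψ])
      (by simpa using ⟨hψφ, hL ψ List.mem_cons_self⟩) ((provC_axK hi ψ φ).of_taut_imp ?_)
    intro v hn ha
    simp only [val_impF v hn ha, val_conjF v hn ha, List.mem_cons, List.not_mem_nil,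
      forall_eq_or_imp]
    tauto

lemma posF_mem_of_imp (hS : MCSet Agt (gpermAx Agt) S) {i : ℕ} (hi : i ∈ Agt) {φ ψ : Fml}
    (hφ : posF i φ ∈ S) (h : ProvC Agt (gpermAx Agt) (impF φ ψ)) : posF i ψ ∈ S :=
  hS.mem_of_provC_imp (h.posF_mono hi) hφ

lemma box_mem_iff (hS : MCSet Agt (gpermAx Agt) S) {φ : Fml} :
    .box φ ∈ S ↔ .cstit 1 (.cstit 0 φ) ∈ S := by
  have hDef := provC_axDef (Agt := Agt) φ
  constructor <;> refine hS.mem_of_provC_imp (hDef.of_taut_imp fun v hn ha => ?_) <;>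
  · simp only [iffF, ha, val_impF v hn ha]
    tauto

end MCSet

def canonicalRel (i : ℕ) (w v : Set Fml) : Prop :=
  ∀ φ : Fml, .cstit i φ ∈ w → φ ∈ v

variable {w u v : Set Fml}

lemma canonicalRel_refl {i : ℕ} (hi : i ∈ Agt) (hw : MCSet Agt (gpermAx Agt) w) :
    canonicalRel i w w :=
  fun φ => hw.mem_of_provC_imp (provC_axT hi φ)

lemma canonicalRel_iff_forall_posF_mem {i : ℕ} (hi : i ∈ Agt) (hw : MCSet Agt (gpermAx Agt) w)
    (hv : MCSet Agt (gpermAx Agt) v) : canonicalRel i w v ↔ ∀ χ ∈ v, posF i χ ∈ w := by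
  have dneg : ∀ φ, .cstit i φ ∈ w → .cstit i (.neg (.neg φ)) ∈ w := fun φ h =>
    hw.cstit_mem_of_imp hi (L := [φ]) (by simpa using h) <| .taut fun v hn ha => by
      simp only [val_impF v hn ha, hn]
      exact not_not_intro
  refine ⟨fun h χ hχ => hw.neg_mem_iff.2 fun hc => hv.neg_mem_iff.1 (h _ hc) hχ,
    fun h φ hφ => ?_⟩
  by_contra hφv
  exact hw.neg_mem_iff.1 (h _ (hv.neg_mem_iff.2 hφv)) (dneg φ hφ)

lemma canonicalRel_euclidean {i : ℕ} (hi : i ∈ Agt) (hw : MCSet Agt (gpermAx Agt) w)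
    (hv : MCSet Agt (gpermAx Agt) v) (hu : MCSet Agt (gpermAx Agt) u)
    (hwv : canonicalRel i w v) (hwu : canonicalRel i w u) : canonicalRel i v u := by
  rw [canonicalRel_iff_forall_posF_mem hi hw hu] at hwu
  rw [canonicalRel_iff_forall_posF_mem hi hv hu]
  intro χ hχ
  exact hwv _ (hw.mem_of_provC_imp (provC_ax5 hi χ) (hwu χ hχ))

lemma canonicalRel_equivalence {i : ℕ} (hi : i ∈ Agt) :
    Equivalence fun w v : {S // MCSet Agt (gpermAx Agt) S} => canonicalRel i w.1 v.1 := by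
  have symm {w v : {S // MCSet Agt (gpermAx Agt) S}} (h : canonicalRel i w.1 v.1) :
      canonicalRel i v.1 w.1 :=
    canonicalRel_euclidean hi w.2 v.2 w.2 h (canonicalRel_refl hi w.2)
  exact ⟨fun w => canonicalRel_refl hi w.2, symm,
    fun {w v u} h₁ h₂ => canonicalRel_euclidean hi v.2 w.2 u.2 (symm h₁) h₂⟩

lemma exists_canonicalRel_superset {i : ℕ} (hi : i ∈ Agt) (hw : MCSet Agt (gpermAx Agt) w)
    {Γ : Set Fml} (hΓ : ∀ L : List Fml, (∀ ψ ∈ L, ψ ∈ Γ) → posF i (conjF L) ∈ w) :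
    ∃ u, MCSet Agt (gpermAx Agt) u ∧ canonicalRel i w u ∧ Γ ⊆ u := by
  have hcon : ConS Agt (gpermAx Agt) ({ψ | .cstit i ψ ∈ w} ∪ Γ) := by
    by_contra hc
    obtain ⟨L₁, L₂, hL₁, hL₂, hP⟩ := exists_imp_neg_of_not_conS_union hc
    exact hw.neg_mem_iff.1 (hΓ L₂ hL₂) (hw.cstit_mem_of_imp hi hL₁ hP)
  obtain ⟨u, hsub, hu⟩ := hcon.exists_mcSet_superset
  exact ⟨u, hu, fun ψ hψ => hsub (.inl hψ), fun ψ hψ => hsub (.inr hψ)⟩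

lemma MCSet.cstit_mem_iff {i : ℕ} (hi : i ∈ Agt) (hw : MCSet Agt (gpermAx Agt) w) {φ : Fml} :
    .cstit i φ ∈ w ↔ ∀ u, MCSet Agt (gpermAx Agt) u → canonicalRel i w u → φ ∈ u := by
  refine ⟨fun h u _ hwu => hwu φ h, fun h => ?_⟩
  by_contra hφ
  have hpos : posF i (.neg φ) ∈ w := hw.neg_mem_iff.2 fun hc => hφ <|
    hw.cstit_mem_of_imp hi (L := [_]) (by simpa using hc) <| .taut fun v hn ha => by
      simp only [conjF, val_impF v hn ha, hn]
      exact not_not.1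
  obtain ⟨u, hu, hwu, hsub⟩ := exists_canonicalRel_superset hi hw (Γ := {.neg φ})
    fun L hL => hw.posF_mem_of_imp hi hpos (.taut (taut_impF_conjF_of_forall_eq hL))
  exact hu.neg_mem_iff.1 (hsub rfl) (h u hu hwu)

lemma exists_mem_forall_le {A : Set ℕ} {n : ℕ} (hn : n ∈ A) :
    ∀ L : List ℕ, (∀ i ∈ L, i ∈ A) → ∃ k ∈ A, n ≤ k ∧ ∀ i ∈ L, i ≤ k
  | [], _ => ⟨n, hn, le_rfl, by simp⟩
  | i :: L, hL => by
    obtain ⟨k, hk, hnk, hLk⟩ := exists_mem_forall_le hn L fun j hj => hL j (.tail _ hj)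
    refine ⟨max i k, ?_, le_max_of_le_right hnk,
      List.forall_mem_cons.2 ⟨le_max_left i k, fun j hj => le_max_of_le_right (hLk j hj)⟩⟩
    rcases max_choice i k with h | h <;> rw [h]
    exacts [hL i List.mem_cons_self, hk]

lemma posF_conjF_posF_mem (hAgt : InitSeg Agt) {l m n : ℕ} (hl : l ∈ Agt) (hm : m ∈ Agt)
    (hn : n ∈ Agt) {x : Set Fml} (hw : MCSet Agt (gpermAx Agt) w)
    (hx : MCSet Agt (gpermAx Agt) x) (hv : MCSet Agt (gpermAx Agt) v)
    (hwx : canonicalRel l w x) (hxv : canonicalRel m x v) (L : List (ℕ × Fml))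
    (hL : ∀ p ∈ L, p.1 ∈ Agt ∧ p.1 ≠ n ∧ p.2 ∈ v) :
    posF n (conjF (L.map fun p => posF p.1 p.2)) ∈ w := by
  set χ := conjF (L.map Prod.snd)
  have hχ : χ ∈ v := hv.conjF_mem (List.forall_mem_map.2 fun p hp => (hL p hp).2.2)
  obtain ⟨k, hk, hnk, hLk⟩ :=
    exists_mem_forall_le hn (L.map Prod.fst) (List.forall_mem_map.2 fun p hp => (hL p hp).1)
  have hlmχ : posF l (posF m χ) ∈ w :=
    (canonicalRel_iff_forall_posF_mem hl hw hx).1 hwx _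
      ((canonicalRel_iff_forall_posF_mem hm hx hv).1 hxv χ hχ)
  have hnΘ := hw.mem_of_provC_imp (provC_gpermFml (fun i hi => hAgt k hk i hi) hl hm hn χ) hlmχ
  refine hw.posF_mem_of_imp hn hnΘ (ProvC.imp_conjF ?_)
  simp only [List.forall_mem_map] at hLk ⊢
  intro p hp
  refine ProvC.imp_trans (.taut (taut_impF_conjF_of_mem ?_))
    (ProvC.posF_mono (hL p hp).1 (.taut (taut_impF_conjF_of_mem (List.mem_map_of_mem hp))))
  simpa [Nat.lt_succ_iff] using ⟨p.1, ⟨hLk p hp, (hL p hp).2.1⟩, rfl⟩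

lemma exists_canonicalRel_genPerm (hAgt : InitSeg Agt) {l m n : ℕ} (hl : l ∈ Agt)
    (hm : m ∈ Agt) (hn : n ∈ Agt) {x : Set Fml} (hw : MCSet Agt (gpermAx Agt) w)
    (hx : MCSet Agt (gpermAx Agt) x) (hv : MCSet Agt (gpermAx Agt) v)
    (hwx : canonicalRel l w x) (hxv : canonicalRel m x v) :
    ∃ u, MCSet Agt (gpermAx Agt) u ∧ canonicalRel n w u ∧
      ∀ i ∈ Agt, i ≠ n → canonicalRel i u v := by
  let P := {p : ℕ × Fml // p.1 ∈ Agt ∧ p.1 ≠ n ∧ p.2 ∈ v}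
  obtain ⟨u, hu, hwu, hsub⟩ := exists_canonicalRel_superset hn hw
    (Γ := Set.range fun p : P => posF p.1.1 p.1.2) fun L hL => by
      obtain ⟨L', rfl⟩ : L ∈ Set.range (List.map fun p : P => posF p.1.1 p.1.2) := by
        rw [Set.range_list_map]
        exact hL
      simpa [Function.comp_def] using posF_conjF_posF_mem hAgt hl hm hn hw hx hv hwx hxv (L'.map Subtype.val)
        (List.forall_mem_map.2 fun p _ => p.2)
  refine ⟨u, hu, hwu, fun i hi hin => (canonicalRel_iff_forall_posF_mem hi hu hv).2 ?_⟩
  exact fun χ hχ => hsub ⟨⟨(i, χ), hi, hin, hχ⟩, rfl⟩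

end Canonical

section CanonicalModel

variable {Agt : Set ℕ}

lemma conS_empty : ConS Agt (gpermAx Agt) ∅ := by
  intro L hL hP
  let M : KModel Agt :=
    ⟨Unit, ⟨()⟩, fun _ _ _ => True, fun _ _ => ⟨fun _ => trivial, fun _ => trivial,
      fun _ _ => trivial⟩, fun _ => ∅⟩
  exact ktruth_of_provC M (fun _ v _ _ _ _ _ _ _ => ⟨v, trivial, fun _ _ _ => trivial⟩) hP ()
    ((ktruth_conjF M L ()).2 fun ψ hψ => absurd (hL ψ hψ) id)

def canonicalModel (Agt : Set ℕ) : KModel Agt where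
  W := {S : Set Fml // MCSet Agt (gpermAx Agt) S}
  neW := let ⟨M, _, hM⟩ := conS_empty.exists_mcSet_superset; ⟨⟨M, hM⟩⟩
  R i w v := canonicalRel i w.1 v.1
  equiv _ hi := canonicalRel_equivalence hi
  V p := {w | .atm p ∈ w.1}

lemma canonicalModel_genPerm (hAgt : InitSeg Agt) : GenPerm (canonicalModel Agt) := by
  rintro w v l hl m hm n hn ⟨x, hwx, hxv⟩
  obtain ⟨u, hu, hwu, huv⟩ := exists_canonicalRel_genPerm hAgt hl hm hn w.2 x.2 v.2 hwx hxv
  exact ⟨⟨u, hu⟩, hwu, huv⟩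

theorem ktruth_canonicalModel_iff (h0 : 0 ∈ Agt) (h1 : 1 ∈ Agt) {φ : Fml} (hφ : NoDstit φ)
    (hφA : AgentsIn Agt φ) (w : (canonicalModel Agt).W) :
    ktruth (canonicalModel Agt) φ w ↔ φ ∈ w.1 := by
  induction φ generalizing w with
  | atm p => rfl
  | neg ψ ih => exact (not_congr (ih hφ hφA w)).trans w.2.neg_mem_iff.symm
  | and ψ χ ih₁ ih₂ =>
    exact (and_congr (ih₁ hφ.1 hφA.1 w) (ih₂ hφ.2 hφA.2 w)).trans w.2.and_mem_iff.symm
  | cstit i ψ ih =>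
    simp only [ktruth, ih hφ hφA.2, w.2.cstit_mem_iff hφA.1]
    exact ⟨fun h u hu => h ⟨u, hu⟩, fun h u => h u.1 u.2⟩
  | dstit => exact hφ.elim
  | box ψ ih =>
    simp only [ktruth, w.2.box_mem_iff, w.2.cstit_mem_iff h1, ih hφ hφA]
    constructor
    · exact fun h x hx hwx => (hx.cstit_mem_iff h0).2 fun u hu hxu => h ⟨u, hu⟩ ⟨⟨x, hx⟩, hwx, hxu⟩
    · exact fun h u ⟨x, hwx, hxu⟩ => (x.2.cstit_mem_iff h0).1 (h x.1 x.2 hwx) u.1 u.2 hxu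

end CanonicalModel

/-- A formula of `L_CSTIT` is valid in all Kripke models that
satisfy the general permutation property (with each `R i` an equivalence
relation) iff it is provable from the axiom schemas `S5(i)` for every agent
`i`, `Def(□) : □φ ↔ [1][0]φ`, and `(GPerm_k)`, by the rules of modus ponens
and `[i]`-necessitation; this holds both when `Agt` is finite with
`|Agt| ≥ 2` and when `Agt = ℕ`. -/
theorem kripke_completeness (Agt : Set ℕ) (hAgt : InitSeg Agt)
    (hcase : (Agt.Finite ∧ 1 ∈ Agt) ∨ Agt = Set.univ)
    (φ : Fml) (hφ : NoDstit φ) (hφA : AgentsIn Agt φ) :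
    validK Agt φ ↔ ProvC Agt (gpermAx Agt) φ := by
  have h1 : 1 ∈ Agt := by
    rcases hcase with ⟨_, h⟩ | rfl
    exacts [h, trivial]
  have h0 : 0 ∈ Agt := hAgt 1 h1 0 zero_le_one
  refine ⟨fun hvalid => ?_, validK_of_provC⟩
  by_contra hφnp
  obtain ⟨w, hw, hφw⟩ := exists_mcSet_not_mem hφnp
  exact hφw <| (ktruth_canonicalModel_iff h0 h1 hφ hφA ⟨w, hw⟩).1 <|
    hvalid _ (canonicalModel_genPerm hAgt) ⟨w, hw⟩

end STIT
end

section
/- If a formula φ of L_CSTIT is satisfiable in some Kripke model in which each R_i is an equivalence relation and R satisfies the general permutation property, then φ is satisfiable in such a Kripke model ⟨W',R',V'⟩ with |W'| ≤ 2^{‖φ‖}, where ‖φ‖ is the length of φ. -/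
/-! Common infrastructure for STIT logic (Chellas STIT, deliberative STIT,
historic necessity), following Balbiani, Herzig & Troquard,
"Alternative axiomatics and complexity of deliberative STIT theories". -/

namespace STIT

/-! If agents `0` and `1` are present, the general permutation property makes `R₁ ∘ R₀` an
equivalence containing every `R_i`. So `□` is universal on the class of a world satisfying `φ`, and
filtrating that class through `sf φ` (worlds `i`-related when they agree on the formulas `[i]χ`)
gives a model of `φ` with at most `2 ^ |sf φ|` worlds.

Otherwise every agent is interpreted by one equivalence `C`, and `□` quantifies over an arbitrary
relation whose successor sets are unions of `C`-classes. Worlds of the small model are then pairs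
`(K, t)`: `K` is a set of signed subformulas realised by some world `a` (positive bodies of
positive boxes on the whole `C`-class of `a`), the pairs with the same `K` form one class, and the
tag `t` picks in the class of `a` a refutation of the body of some `[i]χ`. The `□`-successors of a
world are the sets asking to refute the body of one negative box and to keep the bodies of the
boxes that hold there. Since signed subformulas and bodies of `[i]χ` together number at most `‖φ‖`,
there are at most `2 ^ ‖φ‖` such pairs. -/

theorem mem_sf_self (φ : Fml) : φ ∈ sf φ := by
  cases φ <;> simp [sf]

theorem sf_subset_of_mem {φ ψ : Fml} (h : ψ ∈ sf φ) : sf ψ ⊆ sf φ := by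
  induction φ with
  | atm p => simp_all [sf]
  | neg χ ih | cstit _ χ ih | dstit _ χ ih | box χ ih =>
      simp only [sf, Finset.mem_insert] at h
      rcases h with rfl | h
      · rfl
      · exact (ih h).trans (Finset.subset_insert _ _)
  | and A B ihA ihB =>
      simp only [sf, Finset.mem_insert, Finset.mem_union] at h
      rcases h with rfl | h | h
      · rfl
      · exact (ihA h).trans (Finset.subset_union_left.trans (Finset.subset_insert _ _))
      · exact (ihB h).trans (Finset.subset_union_right.trans (Finset.subset_insert _ _))

theorem card_sf_le_len (φ : Fml) : (sf φ).card ≤ len φ := by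
  induction φ with
  | atm p => simp [sf, len]
  | neg χ ih | cstit _ χ ih | dstit _ χ ih | box χ ih =>
      simp only [sf, len]
      exact (Finset.card_insert_le _ _).trans (by omega)
  | and A B ihA ihB =>
      have := Finset.card_insert_le (Fml.and A B) (sf A ∪ sf B)
      have := Finset.card_union_le (sf A) (sf B)
      simp only [sf, len]; omega

/-- `(ψ, b) ∈ signedSf φ c` when `ψ` occurs in `φ` with polarity `b`, `φ` itself having
polarity `c`. -/
def signedSf : Fml → Bool → Finset (Fml × Bool)
  | .atm p, b => {(.atm p, b)}
  | .neg φ, b => insert (.neg φ, b) (signedSf φ !b)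
  | .and φ ψ, b => insert (.and φ ψ, b) (signedSf φ b ∪ signedSf ψ b)
  | .cstit i φ, b => insert (.cstit i φ, b) (signedSf φ b)
  | .dstit i φ, b => insert (.dstit i φ, b) (signedSf φ b)
  | .box φ, b => insert (.box φ, b) (signedSf φ b)

theorem mem_signedSf_self (φ : Fml) (b : Bool) : (φ, b) ∈ signedSf φ b := by
  cases φ <;> simp [signedSf]

theorem signedSf_subset_of_mem {φ ψ : Fml} {b c : Bool} (h : (ψ, c) ∈ signedSf φ b) :
    signedSf ψ c ⊆ signedSf φ b := by
  induction φ generalizing b with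
  | atm p => simp_all [signedSf]
  | neg χ ih =>
      simp only [signedSf, Finset.mem_insert] at h
      rcases h with h | h
      · simp_all
      · exact (ih h).trans (Finset.subset_insert _ _)
  | cstit _ χ ih | dstit _ χ ih | box χ ih =>
      simp only [signedSf, Finset.mem_insert] at h
      rcases h with h | h
      · simp_all
      · exact (ih h).trans (Finset.subset_insert _ _)
  | and A B ihA ihB =>
      simp only [signedSf, Finset.mem_insert, Finset.mem_union] at h
      rcases h with h | h | h
      · simp_all
      · exact (ihA h).trans (Finset.subset_union_left.trans (Finset.subset_insert _ _))
      · exact (ihB h).trans (Finset.subset_union_right.trans (Finset.subset_insert _ _))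

theorem len_le_of_mem_signedSf {φ ψ : Fml} {b c : Bool} (h : (ψ, c) ∈ signedSf φ b) :
    len ψ ≤ len φ := by
  induction φ generalizing b with
  | atm p => simp_all [signedSf]
  | neg χ ih | cstit _ χ ih | dstit _ χ ih | box χ ih =>
      simp only [signedSf, Finset.mem_insert, Prod.mk.injEq] at h
      rcases h with ⟨rfl, -⟩ | h
      · rfl
      · have := ih h; simp only [len]; omega
  | and A B ihA ihB =>
      simp only [signedSf, Finset.mem_insert, Finset.mem_union, Prod.mk.injEq] at h
      rcases h with ⟨rfl, -⟩ | h | h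
      · rfl
      · have := ihA h; simp only [len]; omega
      · have := ihB h; simp only [len]; omega

def stitBodies : Fml → Finset Fml
  | .atm _ => ∅
  | .neg φ => stitBodies φ
  | .and φ ψ => stitBodies φ ∪ stitBodies ψ
  | .cstit _ φ => insert φ (stitBodies φ)
  | .dstit _ φ => stitBodies φ
  | .box φ => stitBodies φ

theorem mem_stitBodies_of_mem_signedSf {φ χ : Fml} {i : ℕ} {b c : Bool}
    (h : (.cstit i χ, c) ∈ signedSf φ b) : χ ∈ stitBodies φ := by
  induction φ generalizing b with
  | atm p => simp [signedSf] at h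
  | neg ψ ih | dstit _ ψ ih | box ψ ih =>
      simp only [signedSf, Finset.mem_insert] at h
      rcases h with h | h
      · simp at h
      · exact ih h
  | cstit j ψ ih =>
      simp only [signedSf, Finset.mem_insert, Prod.mk.injEq, Fml.cstit.injEq] at h
      rcases h with ⟨⟨-, rfl⟩, -⟩ | h
      · exact Finset.mem_insert_self _ _
      · exact Finset.mem_insert_of_mem (ih h)
  | and A B ihA ihB =>
      simp only [signedSf, Finset.mem_insert, Finset.mem_union] at h
      rcases h with h | h | h
      · simp at h
      · exact Finset.mem_union_left _ (ihA h)
      · exact Finset.mem_union_right _ (ihB h)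

theorem card_signedSf_add_card_stitBodies_le (φ : Fml) (b : Bool) :
    (signedSf φ b).card + (stitBodies φ).card ≤ len φ := by
  induction φ generalizing b with
  | atm p => simp [signedSf, stitBodies, len]
  | neg χ ih =>
      have := Finset.card_insert_le (Fml.neg χ, b) (signedSf χ !b)
      have := ih !b
      simp only [signedSf, stitBodies, len]; omega
  | dstit _ χ ih | box χ ih =>
      have := ih b
      simp only [signedSf, stitBodies, len]
      exact (Nat.add_le_add_right (Finset.card_insert_le _ _) _).trans (by omega)
  | cstit i χ ih =>
      have := Finset.card_insert_le (Fml.cstit i χ, b) (signedSf χ b)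
      have := Finset.card_insert_le χ (stitBodies χ)
      have := ih b
      simp only [signedSf, stitBodies, len]; omega
  | and A B ihA ihB =>
      have := Finset.card_insert_le (Fml.and A B, b) (signedSf A b ∪ signedSf B b)
      have := Finset.card_union_le (signedSf A b) (signedSf B b)
      have := Finset.card_union_le (stitBodies A) (stitBodies B)
      have := ihA b
      have := ihB b
      simp only [signedSf, stitBodies, len]; omega

theorem mk_le_card_of_injective {W α : Type} {f : W → α} (hf : Function.Injective f)
    (T : Finset α) (hT : ∀ w, f w ∈ T) : Cardinal.mk W ≤ T.card :=
  calc Cardinal.mk W ≤ Cardinal.mk T :=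
        Cardinal.mk_le_of_injective (f := fun w => ⟨f w, hT w⟩)
          fun _ _ h => hf (congrArg Subtype.val h)
    _ = T.card := Cardinal.mk_coe_finset

section Filtration

attribute [local instance] Classical.propDecidable

variable {Agt : Set ℕ} (M : KModel Agt)

theorem comp_subset_comp_one_zero (hGP : GenPerm M) (h0 : 0 ∈ Agt) (h1 : 1 ∈ Agt)
    {l m : ℕ} (hl : l ∈ Agt) (hm : m ∈ Agt) {w v : M.W}
    (h : Relation.Comp (M.R l) (M.R m) w v) : Relation.Comp (M.R 1) (M.R 0) w v := by
  obtain ⟨u, hwu, huv⟩ := hGP w v l hl m hm 1 h1 h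
  exact ⟨u, hwu, huv 0 h0 zero_ne_one⟩

theorem equivalence_comp_one_zero (hGP : GenPerm M) (h0 : 0 ∈ Agt) (h1 : 1 ∈ Agt) :
    Equivalence (Relation.Comp (M.R 1) (M.R 0)) where
  refl w := ⟨w, (M.equiv 1 h1).refl w, (M.equiv 0 h0).refl w⟩
  symm := fun ⟨u, hwu, huv⟩ =>
    comp_subset_comp_one_zero M hGP h0 h1 h0 h1
      ⟨u, (M.equiv 0 h0).symm huv, (M.equiv 1 h1).symm hwu⟩
  trans := fun ⟨a, hwa, hau⟩ ⟨b, hub, hbv⟩ => by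
    obtain ⟨c, hac, hcb⟩ := comp_subset_comp_one_zero M hGP h0 h1 h0 h1 ⟨_, hau, hub⟩
    exact ⟨c, (M.equiv 1 h1).trans hwa hac, (M.equiv 0 h0).trans hcb hbv⟩

theorem rel_subset_comp_one_zero (hGP : GenPerm M) (h0 : 0 ∈ Agt) (h1 : 1 ∈ Agt) {i : ℕ}
    (hi : i ∈ Agt) {w v : M.W} (h : M.R i w v) : Relation.Comp (M.R 1) (M.R 0) w v :=
  comp_subset_comp_one_zero M hGP h0 h1 hi hi ⟨v, h, (M.equiv i hi).refl v⟩

variable (φ : Fml)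

noncomputable def theory (w : M.W) : Finset Fml := (sf φ).filter (ktruth M · w)

theorem mem_theory {ψ : Fml} (hψ : ψ ∈ sf φ) {w : M.W} :
    ψ ∈ theory M φ w ↔ ktruth M ψ w := by
  simp [theory, hψ]

theorem theory_subset (w : M.W) : theory M φ w ⊆ sf φ := fun _ h => (Finset.mem_filter.1 h).1

noncomputable def filtration (X : Set M.W) (hX : X.Nonempty) : KModel Agt where
  W := theory M φ '' X
  neW := ⟨⟨_, Set.mem_image_of_mem _ hX.some_mem⟩⟩
  R i f g := ∀ χ, .cstit i χ ∈ sf φ → (.cstit i χ ∈ f.1 ↔ .cstit i χ ∈ g.1)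
  equiv _ _ :=
    ⟨fun _ _ _ => Iff.rfl, fun h χ hχ => (h χ hχ).symm,
      fun h h' χ hχ => (h χ hχ).trans (h' χ hχ)⟩
  V p := {f | .atm p ∈ f.1}

variable {X : Set M.W} (hX : X.Nonempty)

noncomputable def toFiltration {x : M.W} (hx : x ∈ X) : (filtration M φ X hX).W :=
  ⟨theory M φ x, Set.mem_image_of_mem _ hx⟩

theorem filtration_rel_of_rel {i : ℕ} (hi : i ∈ Agt) {x y : M.W} (hx : x ∈ X) (hy : y ∈ X)
    (h : M.R i x y) :
    (filtration M φ X hX).R i (toFiltration M φ hX hx) (toFiltration M φ hX hy) := by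
  intro χ hχ
  simp only [toFiltration, mem_theory M φ hχ]
  exact ⟨fun hx z hz => hx z ((M.equiv i hi).trans h hz),
    fun hy z hz => hy z ((M.equiv i hi).trans ((M.equiv i hi).symm h) hz)⟩

theorem ktruth_filtration (h0 : 0 ∈ Agt) (h1 : 1 ∈ Agt)
    (hclosed : ∀ i ∈ Agt, ∀ x ∈ X, ∀ y, M.R i x y → y ∈ X)
    (hconn : ∀ x ∈ X, ∀ y ∈ X, Relation.Comp (M.R 1) (M.R 0) x y) :
    ∀ ψ ∈ sf φ, NoDstit ψ → AgentsIn Agt ψ → ∀ x (hx : x ∈ X),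
      (ktruth (filtration M φ X hX) ψ (toFiltration M φ hX hx) ↔ ktruth M ψ x) := by
  intro ψ
  induction ψ with
  | atm p => exact fun hψ _ _ x _ => mem_theory M φ hψ
  | neg χ ih =>
      intro hψ hND hA x hx
      exact not_congr (ih (sf_subset_of_mem hψ (by simp [sf, mem_sf_self])) hND hA x hx)
  | and A B ihA ihB =>
      intro hψ hND hA x hx
      exact and_congr (ihA (sf_subset_of_mem hψ (by simp [sf, mem_sf_self])) hND.1 hA.1 x hx)
        (ihB (sf_subset_of_mem hψ (by simp [sf, mem_sf_self])) hND.2 hA.2 x hx)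
  | dstit => exact fun _ hND => hND.elim
  | cstit i χ ih =>
      intro hψ hND hA x hx
      have ihχ := ih (sf_subset_of_mem hψ (by simp [sf, mem_sf_self])) hND hA.2
      constructor
      · intro h y hxy
        have hy := hclosed i hA.1 x hx y hxy
        exact (ihχ y hy).1 (h _ (filtration_rel_of_rel M φ hX hA.1 hx hy hxy))
      · rintro h ⟨_, y, hy, rfl⟩ hg
        have hiy : ktruth M (.cstit i χ) y := by
          rw [← mem_theory M φ hψ]
          exact (hg χ hψ).1 ((mem_theory M φ hψ).2 h)
        exact (ihχ y hy).2 (hiy y ((M.equiv i hA.1).refl y))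
  | box χ ih =>
      intro hψ hND hA x hx
      have ihχ := ih (sf_subset_of_mem hψ (by simp [sf, mem_sf_self])) hND hA
      constructor
      · rintro h v ⟨u, hxu, huv⟩
        have hu := hclosed 1 h1 x hx u hxu
        have hv := hclosed 0 h0 u hu v huv
        exact (ihχ v hv).1 (h _ ⟨toFiltration M φ hX hu,
          filtration_rel_of_rel M φ hX h1 hx hu hxu, filtration_rel_of_rel M φ hX h0 hu hv huv⟩)
      · rintro h ⟨_, y, hy, rfl⟩ -
        exact (ihχ y hy).2 (h y (hconn x hx y hy))

theorem genPerm_filtration (hGP : GenPerm M) (h0 : 0 ∈ Agt) (h1 : 1 ∈ Agt)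
    (hclosed : ∀ i ∈ Agt, ∀ x ∈ X, ∀ y, M.R i x y → y ∈ X)
    (hconn : ∀ x ∈ X, ∀ y ∈ X, Relation.Comp (M.R 1) (M.R 0) x y) :
    GenPerm (filtration M φ X hX) := by
  rintro ⟨_, x, hx, rfl⟩ ⟨_, y, hy, rfl⟩ - - - - n hn -
  obtain ⟨u, hxu, huy⟩ := hGP x y 1 h1 0 h0 n hn (hconn x hx y hy)
  have hu := hclosed n hn x hx u hxu
  exact ⟨toFiltration M φ hX hu, filtration_rel_of_rel M φ hX hn hx hu hxu,
    fun i hi hin => filtration_rel_of_rel M φ hX hi hu hy (huy i hi hin)⟩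

theorem mk_filtration_le : Cardinal.mk (filtration M φ X hX).W ≤ 2 ^ len φ := by
  calc Cardinal.mk (filtration M φ X hX).W ≤ ((sf φ).powerset.card : Cardinal) :=
        mk_le_card_of_injective Subtype.val_injective _
          fun ⟨_, x, _, hx⟩ => Finset.mem_powerset.2 (hx ▸ theory_subset M φ x)
    _ ≤ 2 ^ len φ := by
        rw [Finset.card_powerset]
        exact_mod_cast Nat.pow_le_pow_right two_pos (card_sf_le_len φ)

theorem exists_small_model_of_zero_one_mem (hGP : GenPerm M) (h0 : 0 ∈ Agt) (h1 : 1 ∈ Agt)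
    (hφ : NoDstit φ) (hφA : AgentsIn Agt φ) {w : M.W} (hw : ktruth M φ w) :
    ∃ M' : KModel Agt, GenPerm M' ∧ (∃ w' : M'.W, ktruth M' φ w') ∧
      Cardinal.mk M'.W ≤ 2 ^ len φ := by
  have hE := equivalence_comp_one_zero M hGP h0 h1
  let X := {v | Relation.Comp (M.R 1) (M.R 0) w v}
  have hwX : w ∈ X := hE.refl w
  have hclosed : ∀ i ∈ Agt, ∀ x ∈ X, ∀ y, M.R i x y → y ∈ X := fun i hi x hx y hxy =>
    hE.trans hx (rel_subset_comp_one_zero M hGP h0 h1 hi hxy)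
  have hconn : ∀ x ∈ X, ∀ y ∈ X, Relation.Comp (M.R 1) (M.R 0) x y := fun x hx y hy =>
    hE.trans (hE.symm hx) hy
  exact ⟨filtration M φ X ⟨w, hwX⟩, genPerm_filtration M φ _ hGP h0 h1 hclosed hconn,
    ⟨_, (ktruth_filtration M φ _ h0 h1 hclosed hconn φ (mem_sf_self φ) hφ hφA w hwX).2 hw⟩,
    mk_filtration_le M φ _⟩

end Filtration

section SmallModel

attribute [local instance] Classical.propDecidable

variable {Agt : Set ℕ} (M : KModel Agt) (C : M.W → M.W → Prop) (φ : Fml)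

/-- `a` realises the requirements `K`. Those on bodies of positive boxes are imposed on the whole
`C`-class of `a`, since `□`-successors come in whole classes. -/
def Anchors (a : M.W) (K : Finset (Fml × Bool)) : Prop :=
  ∀ s ∈ K, (ktruth M s.1 a ↔ s.2) ∧
    (s.2 = true → (.box s.1, true) ∈ signedSf φ true → ∀ v, C a v → ktruth M s.1 v)

noncomputable def anchor (K : Finset (Fml × Bool)) : M.W :=
  if h : ∃ a, Anchors M C φ a K then h.choose else M.neW.some

noncomputable def witness (K : Finset (Fml × Bool)) : Option Fml → M.W
  | none => anchor M C φ K
  | some χ =>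
      if h : ∃ v, C (anchor M C φ K) v ∧ ¬ ktruth M χ v then h.choose else anchor M C φ K

/-- A world of the small model: a realisable set of requirements (which determines a `C`-class)
and a tag selecting a member of that class. -/
structure Node where
  key : Finset (Fml × Bool)
  tag : Option Fml
  key_subset : key ⊆ signedSf φ true
  anchored : ∃ a, Anchors M C φ a key
  tag_mem : ∀ χ ∈ tag, χ ∈ stitBodies φ

variable {M C φ}

noncomputable def Node.world (x : Node M C φ) : M.W := witness M C φ x.key x.tag

/-- The requirements of a `□`-successor of `x` refuting `χ`. -/
noncomputable def Node.childKey (x : Node M C φ) (χ : Fml) : Finset (Fml × Bool) :=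
  insert (χ, false) ((signedSf φ true).filter fun s =>
    s.2 = true ∧ (.box s.1, true) ∈ signedSf φ true ∧ ktruth M (.box s.1) x.world)

variable (M C φ)

noncomputable def smallModel (h1 : 1 ∉ Agt) : KModel Agt where
  W := Node M C φ
  neW := ⟨⟨∅, none, Finset.empty_subset _, ⟨M.neW.some, by simp [Anchors]⟩, by simp⟩⟩
  R i x y := if i = 1 then ∃ χ, y.key = x.childKey χ else x.key = y.key
  equiv i hi := by
    simp only [if_neg (ne_of_mem_of_not_mem hi h1)]
    exact ⟨fun _ => rfl, Eq.symm, Eq.trans⟩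
  V p := {x | x.world ∈ M.V p}

variable {M C φ}

theorem anchors_anchor {K : Finset (Fml × Bool)} (h : ∃ a, Anchors M C φ a K) :
    Anchors M C φ (anchor M C φ K) K := by
  rw [anchor, dif_pos h]
  exact h.choose_spec

theorem rel_anchor_world (hC : Equivalence C) (x : Node M C φ) :
    C (anchor M C φ x.key) x.world := by
  rcases x with ⟨K, _ | χ, _, _, _⟩
  · exact hC.refl _
  · simp only [Node.world, witness]
    split_ifs with h
    exacts [h.choose_spec.1, hC.refl _]

theorem smallModel_R_one (h1 : 1 ∉ Agt) {x y : Node M C φ} :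
    (smallModel M C φ h1).R 1 x y ↔ ∃ χ, y.key = x.childKey χ := by
  simp [smallModel]

theorem smallModel_R_of_ne_one (h1 : 1 ∉ Agt) {i : ℕ} (hi : i ≠ 1) {x y : Node M C φ} :
    (smallModel M C φ h1).R i x y ↔ x.key = y.key := by
  simp [smallModel, hi]

end SmallModel

section SmallModelTruth

attribute [local instance] Classical.propDecidable

variable {Agt : Set ℕ} {M : KModel Agt} {C : M.W → M.W → Prop} {φ : Fml}

theorem ktruth_smallModel_cstit (h1 : 1 ∉ Agt) (hC : Equivalence C) {i : ℕ} (hi : i ∈ Agt)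
    (hRi : M.R i = C) {χ : Fml}
    (ih : ∀ y : Node M C φ, ktruth M χ y.world → ktruth (smallModel M C φ h1) χ y)
    {x : Node M C φ} (h : ktruth M (.cstit i χ) x.world) :
    ktruth (smallModel M C φ h1) (.cstit i χ) x := by
  intro y hxy
  have hx := rel_anchor_world hC x
  rw [(smallModel_R_of_ne_one h1 (ne_of_mem_of_not_mem hi h1)).1 hxy] at hx
  exact ih y (h _ (hRi ▸ hC.trans (hC.symm hx) (rel_anchor_world hC y)))

theorem not_ktruth_smallModel_cstit (h1 : 1 ∉ Agt) (hC : Equivalence C) {i : ℕ} (hi : i ∈ Agt)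
    (hRi : M.R i = C)
    {χ : Fml} (hχ : χ ∈ stitBodies φ)
    (ih : ∀ y : Node M C φ, ¬ ktruth M χ y.world → ¬ ktruth (smallModel M C φ h1) χ y)
    {x : Node M C φ} (h : ¬ ktruth M (.cstit i χ) x.world) :
    ¬ ktruth (smallModel M C φ h1) (.cstit i χ) x := by
  have hex : ∃ v, C (anchor M C φ x.key) v ∧ ¬ ktruth M χ v := by
    simp only [ktruth, not_forall] at h
    obtain ⟨v, hv, hχv⟩ := h
    exact ⟨v, hC.trans (rel_anchor_world hC x) (hRi ▸ hv), hχv⟩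
  let y : Node M C φ := ⟨x.key, some χ, x.key_subset, x.anchored, by simpa using hχ⟩
  have hy : ¬ ktruth M χ y.world := by
    simp only [y, Node.world, witness, dif_pos hex]
    exact hex.choose_spec.2
  exact fun H => ih y hy (H y ((smallModel_R_of_ne_one h1 (ne_of_mem_of_not_mem hi h1)).2 rfl))

theorem ktruth_smallModel_box (h1 : 1 ∉ Agt) (hC : Equivalence C) {χ : Fml}
    (hχ : (.box χ, true) ∈ signedSf φ true)
    (ih : ∀ y : Node M C φ, ktruth M χ y.world → ktruth (smallModel M C φ h1) χ y)
    {x : Node M C φ} (h : ktruth M (.box χ) x.world) :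
    ktruth (smallModel M C φ h1) (.box χ) x := by
  rintro y ⟨z, hxz, hzy⟩
  obtain ⟨χ', hz⟩ := (smallModel_R_one h1).1 hxz
  have hmem : (χ, true) ∈ y.key := by
    rw [← (smallModel_R_of_ne_one h1 zero_ne_one).1 hzy, hz, Node.childKey]
    refine Finset.mem_insert_of_mem (Finset.mem_filter.2 ⟨?_, rfl, hχ, h⟩)
    exact signedSf_subset_of_mem hχ (by simp [signedSf, mem_signedSf_self])
  exact ih y ((anchors_anchor y.anchored _ hmem).2 rfl hχ _ (rel_anchor_world hC y))

theorem not_ktruth_smallModel_box (h1 : 1 ∉ Agt)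
    (hSC : ∀ {w u v}, Relation.Comp (M.R 1) (M.R 0) w u → C u v →
      Relation.Comp (M.R 1) (M.R 0) w v)
    {χ : Fml} (hχ : (.box χ, false) ∈ signedSf φ true)
    (ih : ∀ y : Node M C φ, ¬ ktruth M χ y.world → ¬ ktruth (smallModel M C φ h1) χ y)
    {x : Node M C φ} (h : ¬ ktruth M (.box χ) x.world) :
    ¬ ktruth (smallModel M C φ h1) (.box χ) x := by
  obtain ⟨v, hxv, hχv⟩ :
      ∃ v, Relation.Comp (M.R 1) (M.R 0) x.world v ∧ ¬ ktruth M χ v := by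
    simpa [ktruth] using h
  have hanch : Anchors M C φ v (x.childKey χ) := by
    intro s hs
    rcases Finset.mem_insert.1 hs with rfl | hs
    · simpa using hχv
    · obtain ⟨-, hs2, -, hbox⟩ := Finset.mem_filter.1 hs
      rcases s with ⟨β, _ | _⟩
      · simp at hs2
      · exact ⟨by simpa using hbox v hxv, fun _ _ v' hvv' => hbox v' (hSC hxv hvv')⟩
  let y : Node M C φ := ⟨x.childKey χ, none,
    Finset.insert_subset (signedSf_subset_of_mem hχ (by simp [signedSf, mem_signedSf_self]))
      (Finset.filter_subset _ _), ⟨v, hanch⟩, by simp⟩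
  have hy : ¬ ktruth M χ (anchor M C φ y.key) := by
    simpa using (anchors_anchor ⟨v, hanch⟩ _ (Finset.mem_insert_self _ _)).1
  exact fun H => ih y hy (H y ⟨y, (smallModel_R_one h1).2 ⟨χ, rfl⟩,
    (smallModel_R_of_ne_one h1 zero_ne_one).2 rfl⟩)

theorem ktruth_smallModel_of_mem_signedSf (h1 : 1 ∉ Agt) (hC : Equivalence C)
    (hRC : ∀ i ∈ Agt, M.R i = C)
    (hSC : ∀ {w u v}, Relation.Comp (M.R 1) (M.R 0) w u → C u v →
      Relation.Comp (M.R 1) (M.R 0) w v) :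
    ∀ ψ, NoDstit ψ → AgentsIn Agt ψ → ∀ b : Bool, (ψ, b) ∈ signedSf φ true →
      ∀ x : Node M C φ,
      (ktruth M ψ x.world ↔ b) → (ktruth (smallModel M C φ h1) ψ x ↔ b) := by
  intro ψ
  induction ψ with
  | atm p => exact fun _ _ _ _ _ h => h
  | neg χ ih =>
      intro hND hA b hb x
      have := ih hND hA (!b) (signedSf_subset_of_mem hb
        (Finset.mem_insert_of_mem (mem_signedSf_self χ _))) x
      cases b <;> simpa [ktruth] using this
  | and A B ihA ihB =>
      intro hND hA b hb x
      have hA' := ihA hND.1 hA.1 b (signedSf_subset_of_mem hb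
        (Finset.mem_insert_of_mem (Finset.mem_union_left _ (mem_signedSf_self A b)))) x
      have hB' := ihB hND.2 hA.2 b (signedSf_subset_of_mem hb
        (Finset.mem_insert_of_mem (Finset.mem_union_right _ (mem_signedSf_self B b)))) x
      cases b <;> simp only [ktruth, Bool.false_eq_true, iff_false, iff_true] at * <;> tauto
  | dstit => exact fun hND => (hND : False).elim
  | cstit i χ ih =>
      intro hND hA b hb x
      have ihχ := ih hND hA.2 b (signedSf_subset_of_mem hb
        (Finset.mem_insert_of_mem (mem_signedSf_self χ b)))
      cases b
      · simpa using not_ktruth_smallModel_cstit h1 hC hA.1 (hRC i hA.1)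
          (mem_stitBodies_of_mem_signedSf hb) (fun y => by simpa using ihχ y)
      · simpa using ktruth_smallModel_cstit h1 hC hA.1 (hRC i hA.1)
          (fun y => by simpa using ihχ y)
  | box χ ih =>
      intro hND hA b hb x
      have ihχ := ih hND hA b (signedSf_subset_of_mem hb
        (Finset.mem_insert_of_mem (mem_signedSf_self χ b)))
      cases b
      · simpa using not_ktruth_smallModel_box h1 hSC hb (fun y => by simpa using ihχ y)
      · simpa using ktruth_smallModel_box h1 hC hb (fun y => by simpa using ihχ y)

theorem genPerm_smallModel (h1 : 1 ∉ Agt) : GenPerm (smallModel M C φ h1) := by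
  intro w v l hl m hm n hn ⟨u, hwu, huv⟩
  have hwu := (smallModel_R_of_ne_one h1 (ne_of_mem_of_not_mem hl h1)).1 hwu
  have huv := (smallModel_R_of_ne_one h1 (ne_of_mem_of_not_mem hm h1)).1 huv
  refine ⟨w, (smallModel_R_of_ne_one h1 (ne_of_mem_of_not_mem hn h1)).2 rfl, fun i hi _ => ?_⟩
  exact (smallModel_R_of_ne_one h1 (ne_of_mem_of_not_mem hi h1)).2 (hwu.trans huv)

theorem mk_smallModel_le (h1 : 1 ∉ Agt) :
    Cardinal.mk (smallModel M C φ h1).W ≤ 2 ^ len φ := by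
  let T := (signedSf φ true).powerset ×ˢ insert none ((stitBodies φ).image some)
  have hT : ∀ x : Node M C φ, (x.key, x.tag) ∈ T := by
    intro x
    refine Finset.mem_product.2 ⟨Finset.mem_powerset.2 x.key_subset, ?_⟩
    rcases h : x.tag with _ | χ
    · exact Finset.mem_insert_self _ _
    · exact Finset.mem_insert_of_mem (Finset.mem_image_of_mem _ (x.tag_mem χ (h ▸ rfl)))
  have hinj : Function.Injective fun x : Node M C φ => (x.key, x.tag) := by
    rintro ⟨_, _, _, _, _⟩ ⟨_, _, _, _, _⟩ h
    obtain ⟨rfl, rfl⟩ := Prod.mk.inj h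
    rfl
  have hcard : T.card ≤ 2 ^ len φ := by
    have hU := card_signedSf_add_card_stitBodies_le φ true
    calc T.card = 2 ^ (signedSf φ true).card * ((stitBodies φ).card + 1) := by
          simp [T, Finset.card_product, Finset.card_powerset,
            Finset.card_image_of_injective _ (Option.some_injective _)]
      _ ≤ 2 ^ (signedSf φ true).card * 2 ^ (stitBodies φ).card :=
          Nat.mul_le_mul_left _ Nat.lt_two_pow_self
      _ ≤ 2 ^ len φ := by
          rw [← pow_add]
          exact Nat.pow_le_pow_right two_pos hU
  calc Cardinal.mk (smallModel M C φ h1).W ≤ T.card := mk_le_card_of_injective hinj T hT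
    _ ≤ 2 ^ len φ := by exact_mod_cast hcard

theorem exists_small_model_of_one_not_mem (h1 : 1 ∉ Agt) (hC : Equivalence C)
    (hRC : ∀ i ∈ Agt, M.R i = C)
    (hSC : ∀ {w u v}, Relation.Comp (M.R 1) (M.R 0) w u → C u v →
      Relation.Comp (M.R 1) (M.R 0) w v)
    (hφ : NoDstit φ) (hφA : AgentsIn Agt φ) {w : M.W} (hw : ktruth M φ w) :
    ∃ M' : KModel Agt, GenPerm M' ∧ (∃ w' : M'.W, ktruth M' φ w') ∧
      Cardinal.mk M'.W ≤ 2 ^ len φ := by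
  have hanch : Anchors M C φ w {(φ, true)} := by
    intro s hs
    rw [Finset.mem_singleton.1 hs]
    refine ⟨by simpa using hw, fun _ hbox => ?_⟩
    have := len_le_of_mem_signedSf hbox
    simp only [len] at this
    omega
  let x : Node M C φ := ⟨{(φ, true)}, none,
    Finset.singleton_subset_iff.2 (mem_signedSf_self φ true), ⟨w, hanch⟩, by simp⟩
  have hx : ktruth M φ (anchor M C φ x.key) := by
    simpa using (anchors_anchor ⟨w, hanch⟩ _ (Finset.mem_singleton_self _)).1
  refine ⟨smallModel M C φ h1, genPerm_smallModel h1, ⟨x, ?_⟩, mk_smallModel_le h1⟩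
  simpa using ktruth_smallModel_of_mem_signedSf h1 hC hRC hSC φ hφ hφA true
    (mem_signedSf_self φ true) x (iff_of_true hx rfl)

end SmallModelTruth

/-- If a formula `φ` of `L_CSTIT` is satisfiable in some Kripke
model in which each `R i` is an equivalence relation and `R` satisfies the
general permutation property, then `φ` is satisfiable in such a Kripke model
`⟨W',R',V'⟩` with `|W'| ≤ 2^{‖φ‖}`. -/
theorem small_model_property (Agt : Set ℕ) (hAgt : InitSeg Agt)
    (φ : Fml) (hφ : NoDstit φ) (hφA : AgentsIn Agt φ)
    (hsat : satK Agt φ) :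
    ∃ M : KModel Agt, GenPerm M ∧ (∃ w : M.W, ktruth M φ w) ∧
      Cardinal.mk M.W ≤ 2 ^ len φ := by
  obtain ⟨M, hGP, w, hw⟩ := hsat
  by_cases h1 : 1 ∈ Agt
  · exact exists_small_model_of_zero_one_mem M φ hGP (hAgt 1 h1 0 zero_le_one) h1 hφ hφA hw
  have hAgt0 : ∀ i ∈ Agt, i = 0 := fun i hi => by
    by_contra hne
    exact h1 (hAgt i hi 1 (Nat.one_le_iff_ne_zero.2 hne))
  by_cases h0 : 0 ∈ Agt
  · exact exists_small_model_of_one_not_mem h1 (M.equiv 0 h0) (fun i hi => hAgt0 i hi ▸ rfl)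
      (fun ⟨u, hwu, huv⟩ hvv' => ⟨u, hwu, (M.equiv 0 h0).trans huv hvv'⟩) hφ hφA hw
  · exact exists_small_model_of_one_not_mem h1 (C := Eq) eq_equivalence
      (fun i hi => (h0 (hAgt0 i hi ▸ hi)).elim) (fun h hvv' => hvv' ▸ h) hφ hφA hw

end STIT
end

section
/- Let Agt be a set of agents with {0,1} ⊊ Agt, and let φ be a formula of L_CSTIT in which only the agent symbols 0 and 1 occur. Then φ is satisfiable in a Kripke model over the agent set {0,1} (each relation an equivalence relation, satisfying the general permutation property) if and only if φ is satisfiable in such a Kripke model over the agent set Agt; equivalently, the logic of Kripke models for Agt is a conservative extension of that for {0,1}. -/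
/-! Common infrastructure for STIT logic (Chellas STIT, deliberative STIT,
historic necessity), following Balbiani, Herzig & Troquard,
"Alternative axiomatics and complexity of deliberative STIT theories". -/

namespace STIT

/-! Restricting a model to fewer agents changes nothing a formula over `0` and `1` can see.
Conversely, in a model over `{0, 1}` the general permutation property makes `R 0` and `R 1`
commute, so their composite, the accessibility relation of `□`, is an equivalence relation
containing both; interpreting every further agent by it preserves the general permutation
property and leaves `R 0` and `R 1` untouched. -/

namespace KModel

def withRel {A : Set ℕ} (M : KModel A) (B : Set ℕ) (R : ℕ → M.W → M.W → Prop)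
    (hR : ∀ i ∈ B, Equivalence (R i)) : KModel B where
  W := M.W
  neW := M.neW
  R := R
  equiv := hR
  V := M.V

theorem ktruth_withRel {A B C : Set ℕ} (M : KModel A) (R : ℕ → M.W → M.W → Prop)
    (hR : ∀ i ∈ B, Equivalence (R i)) (h0 : 0 ∈ C) (h1 : 1 ∈ C)
    (hRC : ∀ i ∈ C, R i = M.R i) (φ : Fml) (hφ : AgentsIn C φ) (w : M.W) :
    ktruth (M.withRel B R hR) φ w ↔ ktruth M φ w := by
  induction φ generalizing w with
  | atm p => exact Iff.rfl
  | neg φ ih => exact not_congr (ih hφ w)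
  | and φ ψ ihφ ihψ => exact and_congr (ihφ hφ.1 w) (ihψ hφ.2 w)
  | cstit i φ ih =>
    change (∀ u, R i w u → _) ↔ _
    rw [hRC i hφ.1]
    exact forall_congr' fun u => imp_congr_right fun _ => ih hφ.2 u
  | dstit i φ ih =>
    change (∀ u, R i w u → _) ∧ (∃ u, Relation.Comp (R 1) (R 0) w u ∧ _) ↔ _
    rw [hRC i hφ.1, hRC 1 h1, hRC 0 h0]
    exact and_congr (forall_congr' fun u => imp_congr_right fun _ => ih hφ.2 u)
      (exists_congr fun u => and_congr_right fun _ => not_congr (ih hφ.2 u))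
  | box φ ih =>
    change (∀ u, Relation.Comp (R 1) (R 0) w u → _) ↔ _
    rw [hRC 1 h1, hRC 0 h0]
    exact forall_congr' fun u => imp_congr_right fun _ => ih hφ u

section Restrict

variable {A B : Set ℕ}

def restrict (M : KModel B) (hAB : A ⊆ B) : KModel A :=
  M.withRel A M.R fun i hi => M.equiv i (hAB hi)

theorem genPerm_restrict {M : KModel B} (hM : GenPerm M) (hAB : A ⊆ B) :
    GenPerm (M.restrict hAB) := by
  intro w v l hl m hm n hn hlm
  obtain ⟨u, hwu, huv⟩ := hM w v l (hAB hl) m (hAB hm) n (hAB hn) hlm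
  exact ⟨u, hwu, fun i hi hin => huv i (hAB hi) hin⟩

theorem ktruth_restrict (M : KModel B) (hAB : A ⊆ B) (h0 : 0 ∈ A) (h1 : 1 ∈ A) (φ : Fml)
    (hφ : AgentsIn A φ) (w : M.W) : ktruth (M.restrict hAB) φ w ↔ ktruth M φ w :=
  M.ktruth_withRel M.R _ h0 h1 (fun _ _ => rfl) φ hφ w

end Restrict

section TwoAgents

variable {M : KModel {0, 1}}

theorem comp_R_one_zero_of_comp_R_zero_one (hM : GenPerm M) {w v : M.W}
    (h : Relation.Comp (M.R 0) (M.R 1) w v) : Relation.Comp (M.R 1) (M.R 0) w v := by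
  obtain ⟨u, hwu, huv⟩ := hM w v 0 (.inl rfl) 1 (.inr rfl) 1 (.inr rfl) h
  exact ⟨u, hwu, huv 0 (.inl rfl) zero_ne_one⟩

theorem equivalence_comp_R (hM : GenPerm M) : Equivalence (Relation.Comp (M.R 1) (M.R 0)) := by
  have e0 := M.equiv 0 (.inl rfl)
  have e1 := M.equiv 1 (.inr rfl)
  refine ⟨fun w => ⟨w, e1.refl w, e0.refl w⟩, ?_, ?_⟩
  · rintro w v ⟨a, hwa, hav⟩
    exact comp_R_one_zero_of_comp_R_zero_one hM ⟨a, e0.symm hav, e1.symm hwa⟩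
  · rintro w v x ⟨a, hwa, hav⟩ ⟨b, hvb, hbx⟩
    obtain ⟨c, hac, hcb⟩ := comp_R_one_zero_of_comp_R_zero_one hM ⟨v, hav, hvb⟩
    exact ⟨c, e1.trans hwa hac, e0.trans hcb hbx⟩

theorem R_le_comp_R (hM : GenPerm M) {i : ℕ} (hi : i = 0 ∨ i = 1) {w v : M.W}
    (h : M.R i w v) : Relation.Comp (M.R 1) (M.R 0) w v := by
  rcases hi with rfl | rfl
  · exact comp_R_one_zero_of_comp_R_zero_one hM ⟨v, h, (M.equiv 1 (.inr rfl)).refl v⟩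
  · exact ⟨v, h, (M.equiv 0 (.inl rfl)).refl v⟩

def extendR (M : KModel {0, 1}) (i : ℕ) : M.W → M.W → Prop :=
  if i = 0 ∨ i = 1 then M.R i else Relation.Comp (M.R 1) (M.R 0)

theorem extendR_of_mem (M : KModel {0, 1}) {i : ℕ} (hi : i = 0 ∨ i = 1) :
    M.extendR i = M.R i :=
  if_pos hi

theorem extendR_of_not_mem (M : KModel {0, 1}) {i : ℕ} (hi : ¬(i = 0 ∨ i = 1)) :
    M.extendR i = Relation.Comp (M.R 1) (M.R 0) :=
  if_neg hi

theorem equivalence_extendR (hM : GenPerm M) (i : ℕ) : Equivalence (M.extendR i) := by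
  by_cases hi : i = 0 ∨ i = 1
  · rw [M.extendR_of_mem hi]; exact M.equiv i hi
  · rw [M.extendR_of_not_mem hi]; exact equivalence_comp_R hM

theorem extendR_le_comp_R (hM : GenPerm M) (i : ℕ) {w v : M.W} (h : M.extendR i w v) :
    Relation.Comp (M.R 1) (M.R 0) w v := by
  by_cases hi : i = 0 ∨ i = 1
  · rw [M.extendR_of_mem hi] at h; exact R_le_comp_R hM hi h
  · rwa [M.extendR_of_not_mem hi] at h

def extend (M : KModel {0, 1}) (hM : GenPerm M) (B : Set ℕ) : KModel B :=
  M.withRel B M.extendR fun i _ => equivalence_extendR hM i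

theorem genPerm_extend (hM : GenPerm M) (B : Set ℕ) : GenPerm (M.extend hM B) := by
  have hS := equivalence_comp_R hM
  intro w v l _ m _ n _ ⟨x, hwx, hxv⟩
  have hwv := hS.trans (extendR_le_comp_R hM l hwx) (extendR_le_comp_R hM m hxv)
  change ∃ u, M.extendR n w u ∧ ∀ i ∈ B, i ≠ n → M.extendR i u v
  by_cases hn : n = 0 ∨ n = 1
  · obtain ⟨u, hwu, huv⟩ := hM w v 1 (.inr rfl) 0 (.inl rfl) n hn hwv
    refine ⟨u, by rwa [M.extendR_of_mem hn], fun i _ hin => ?_⟩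
    by_cases hi : i = 0 ∨ i = 1
    · rw [M.extendR_of_mem hi]
      exact huv i hi hin
    · -- `u` and `v` are both `□`-related to `w`
      rw [M.extendR_of_not_mem hi]
      exact hS.trans (hS.symm (R_le_comp_R hM hn hwu)) hwv
  · exact ⟨v, by rwa [M.extendR_of_not_mem hn], fun i _ _ => (equivalence_extendR hM i).refl v⟩

theorem ktruth_extend (hM : GenPerm M) (B : Set ℕ) (φ : Fml) (hφ : AgentsIn {0, 1} φ)
    (w : M.W) : ktruth (M.extend hM B) φ w ↔ ktruth M φ w :=
  M.ktruth_withRel M.extendR _ (.inl rfl) (.inr rfl) (fun _ hi => M.extendR_of_mem hi) φ hφ w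

end TwoAgents

end KModel

theorem conservative_extension_general (Agt : Set ℕ)
    (hsub : ({0, 1} : Set ℕ) ⊂ Agt)
    (φ : Fml) (hφA : AgentsIn {0, 1} φ) :
    satK {0, 1} φ ↔ satK Agt φ := by
  constructor
  · rintro ⟨M, hM, w, hw⟩
    exact ⟨M.extend hM Agt, KModel.genPerm_extend hM Agt, w,
      (KModel.ktruth_extend hM Agt φ hφA w).2 hw⟩
  · rintro ⟨N, hN, w, hw⟩
    exact ⟨N.restrict hsub.subset, KModel.genPerm_restrict hN hsub.subset, w,
      (N.ktruth_restrict hsub.subset (.inl rfl) (.inr rfl) φ hφA w).2 hw⟩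

/-- Let `{0,1} ⊊ Agt` and let `φ` be a formula of `L_CSTIT` in
which only the agent symbols `0` and `1` occur. Then `φ` is satisfiable in a
Kripke model over the agent set `{0,1}` (each relation an equivalence
relation, satisfying the general permutation property) iff `φ` is
satisfiable in such a Kripke model over the agent set `Agt` (conservative
extension). -/
theorem conservative_extension (Agt : Set ℕ) (hAgt : InitSeg Agt)
    (hsub : ({0, 1} : Set ℕ) ⊂ Agt)
    (φ : Fml) (hφ : NoDstit φ) (hφA : AgentsIn {0, 1} φ) :
    satK {0, 1} φ ↔ satK Agt φ :=
  conservative_extension_general Agt hsub φ hφA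

end STIT
end

section
/- For every formula φ0 of L_DSTIT: if the translation tr(φ0) = p_{φ0} ∧ ⋀_{ψ ∈ sf(φ0)} □B_ψ is satisfiable in BT+AC structures, then φ0 is satisfiable in BT+AC structures. -/
/-! Common infrastructure for STIT logic (Chellas STIT, deliberative STIT,
historic necessity), following Balbiani, Herzig & Troquard,
"Alternative axiomatics and complexity of deliberative STIT theories". -/

namespace STIT

section Semantics

variable {Agt : Set ℕ} (M : BTAC Agt)

theorem truth_iffF (φ ψ : Fml) (w : M.W) (h : Set M.W) :
    truth M (iffF φ ψ) w h ↔ (truth M φ w h ↔ truth M ψ w h) := by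
  simp only [iffF, impF, truth]
  tauto

theorem truth_conjF (l : List Fml) (w : M.W) (h : Set M.W) :
    truth M (conjF l) w h ↔ ∀ χ ∈ l, truth M χ w h := by
  induction l with
  | nil => simp [conjF, impF, truth]
  | cons φ l ih =>
    cases l with
    | nil => simp [conjF]
    | cons ψ l => simp only [conjF, truth, ih, List.forall_mem_cons]

theorem truth_dstit (i : ℕ) (φ : Fml) (w : M.W) (h : Set M.W) :
    truth M (.dstit i φ) w h ↔ truth M (.cstit i φ) w h ∧ ¬ truth M (.box φ) w h := by
  simp only [truth, not_forall, exists_prop]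

theorem truth_tr (pA : Fml → ℕ) (φ0 : Fml) (w : M.W) (h : Set M.W) :
    truth M (tr pA φ0) w h ↔
      truth M (.atm (pA φ0)) w h ∧ ∀ ψ ∈ sf φ0, truth M (.box (Beq pA ψ)) w h := by
  simp only [tr, truth, truth_conjF, List.forall_mem_map, Finset.mem_toList]

def AgreeAt (w : M.W) (φ ψ : Fml) : Prop :=
  ∀ h : Set M.W, IsMaxChain M.lt h → w ∈ h → (truth M φ w h ↔ truth M ψ w h)

namespace AgreeAt

variable {M} {w : M.W} {φ ψ φ' ψ' : Fml}

theorem trans {χ : Fml} (h₁ : AgreeAt M w φ ψ) (h₂ : AgreeAt M w ψ χ) : AgreeAt M w φ χ :=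
  fun h hm hw => (h₁ h hm hw).trans (h₂ h hm hw)

theorem of_box_iffF (H : ∀ h : Set M.W, IsMaxChain M.lt h → w ∈ h → truth M (iffF φ ψ) w h) :
    AgreeAt M w φ ψ :=
  fun h hm hw => (truth_iffF M φ ψ w h).1 (H h hm hw)

theorem neg (H : AgreeAt M w φ ψ) : AgreeAt M w (.neg φ) (.neg ψ) :=
  fun h hm hw => not_congr (H h hm hw)

theorem and (H : AgreeAt M w φ ψ) (H' : AgreeAt M w φ' ψ') :
    AgreeAt M w (.and φ φ') (.and ψ ψ') :=
  fun h hm hw => and_congr (H h hm hw) (H' h hm hw)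

theorem box (H : AgreeAt M w φ ψ) : AgreeAt M w (.box φ) (.box ψ) :=
  fun _ _ _ => forall₃_congr fun h hm hw => H h hm hw

/-- Cells of `Choice i w` consist of histories through `w` only for agents `i ∈ Agt`. -/
theorem cstit {i : ℕ} (hi : i ∈ Agt) (H : AgreeAt M w φ ψ) :
    AgreeAt M w (.cstit i φ) (.cstit i ψ) := by
  refine fun _ _ _ => forall₂_congr fun h' hcell => ?_
  obtain ⟨Q, hQ, -, hh'⟩ := hcell
  obtain ⟨hmax, hw⟩ := M.choice_hist i hi w Q hQ h' hh'
  exact H h' hmax hw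

theorem dstit {i : ℕ} (hi : i ∈ Agt) (H : AgreeAt M w φ ψ) :
    AgreeAt M w (.dstit i φ) (.dstit i ψ) := by
  intro h hm hw
  simp only [truth_dstit]
  exact and_congr (H.cstit hi h hm hw) (not_congr (H.box h hm hw))

end AgreeAt

theorem agreeAt_atm_of_forall_Beq {w : M.W} {pA : Fml → ℕ} {ψ : Fml} (hψ : AgentsIn Agt ψ)
    (hB : ∀ χ ∈ sf ψ, ∀ h : Set M.W, IsMaxChain M.lt h → w ∈ h → truth M (Beq pA χ) w h) :
    AgreeAt M w (.atm (pA ψ)) ψ := by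
  induction ψ <;> have hhead := AgreeAt.of_box_iffF (hB _ (mem_sf_self _))
  case atm => exact hhead
  case neg φ ih =>
    exact hhead.trans (ih hψ (fun χ hχ => hB χ (Finset.mem_insert_of_mem hχ))).neg
  case and φ φ' ih ih' =>
    have hφ := ih hψ.1 fun χ hχ => hB χ (by simp [sf, hχ])
    have hφ' := ih' hψ.2 fun χ hχ => hB χ (by simp [sf, hχ])
    exact hhead.trans (hφ.and hφ')
  case cstit i φ ih =>
    exact hhead.trans ((ih hψ.2 fun χ hχ => hB χ (Finset.mem_insert_of_mem hχ)).cstit hψ.1)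
  case dstit i φ ih =>
    have hφ := ih hψ.2 fun χ hχ => hB χ (Finset.mem_insert_of_mem hχ)
    have hdstit : AgreeAt M w (.atm (pA (.dstit i φ))) (.dstit i (.atm (pA φ))) := by
      intro h hm hw
      rw [hhead h hm hw, truth_dstit]
      rfl
    exact hdstit.trans (hφ.dstit hψ.1)
  case box φ ih =>
    exact hhead.trans (ih hψ fun χ hχ => hB χ (Finset.mem_insert_of_mem hχ)).box

end Semantics

theorem tr_sat_implies_dstit_sat_general (Agt : Set ℕ)
    (φ0 : Fml) (hφ0A : AgentsIn Agt φ0)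
    (pA : Fml → ℕ)
    (hsat : satBTAC Agt (tr pA φ0)) :
    satBTAC Agt φ0 := by
  obtain ⟨M, w, h, hmax, hwh, htr⟩ := hsat
  rw [truth_tr] at htr
  have hagree := agreeAt_atm_of_forall_Beq M hφ0A fun ψ hψ => htr.2 ψ hψ
  exact ⟨M, w, h, hmax, hwh, (hagree h hmax hwh).1 htr.1⟩

/-- For every formula `φ₀` of `L_DSTIT`: if the translation
`tr(φ₀) = p_{φ₀} ∧ ⋀_{ψ ∈ sf(φ₀)} □B_ψ` is satisfiable in BT+AC structures,
then `φ₀` is satisfiable in BT+AC structures. -/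
theorem tr_sat_implies_dstit_sat (Agt : Set ℕ) (hAgt : InitSeg Agt)
    (φ0 : Fml) (hφ0 : NoCstit φ0) (hφ0A : AgentsIn Agt φ0)
    (pA : Fml → ℕ) (hfresh : Fresh pA φ0)
    (hsat : satBTAC Agt (tr pA φ0)) :
    satBTAC Agt φ0 :=
  tr_sat_implies_dstit_sat_general Agt φ0 hφ0A pA hsat

end STIT
end
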